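/- arXiv:1612.09358 — 10 statements merged into one kernel-verified Lean document; each statement's English description precedes it below -/
import Mathlib

section
/- Let (y1, y2) be a solution of the Berger boundary value problem with phi(0) ≠ 1 (where phi = exp∘y2). Then y1'(x) > 0 for all x ∈ (0,1); in particular K = exp∘y1 is strictly increasing on (0,1). -/
open Real Set

/-!
Multiplying (E1) by the integrating factor `(1 - x²)² / x` turns it into
`((1 - x²)² / x · y1')' = -(1 - x²)² / x · (y1'² / 6 + y2'² / 3) ≤ 0`.
So `w = (1 - x²)² / x · y1'` is antitone on `(0, 1]` and vanishes at `1`, hence `y1' ≥ 0`.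
If `y1'(x₀) = 0` for some `x₀ ∈ (0, 1)`, then `w ≡ 0` on `[x₀, 1]`, which forces `y2' ≡ 0`
on `(x₀, 1)`, hence on `(0, 1]` by analyticity; then `y2(0) = y2(1) = 0`, contradicting
`phi(0) ≠ 1`.
-/

/-- Equation (E1) of the Berger Einstein ODE system:
`y1'' + (1/6)(y1')² + (1/3)(y2')² − x⁻¹(1+3x²)(1−x²)⁻¹ y1' = 0`. -/
noncomputable def BergerE1 (y1 y2 : ℝ → ℝ) (x : ℝ) : ℝ :=
  deriv (deriv y1) x + (1/6) * (deriv y1 x)^2 + (1/3) * (deriv y2 x)^2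
    - x⁻¹ * (1 + 3*x^2) * (1 - x^2)⁻¹ * deriv y1 x

/-- Equation (E2) of the Berger Einstein ODE system, with `K = exp ∘ y1`, `phi = exp ∘ y2`:
`y1'' + (1/2)(y1')² − x⁻¹(5+7x²)(1−x²)⁻¹ y1'
  + 8(1−x²)⁻²(6 − 8 K^{-1/3} phi^{-1/3} + 2 K^{-1/3} phi^{-4/3}) = 0`. -/
noncomputable def BergerE2 (y1 y2 : ℝ → ℝ) (x : ℝ) : ℝ :=
  deriv (deriv y1) x + (1/2) * (deriv y1 x)^2
    - x⁻¹ * (5 + 7*x^2) * (1 - x^2)⁻¹ * deriv y1 x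
    + 8 * ((1 - x^2)⁻¹)^2 *
      (6 - 8 * Real.exp (y1 x) ^ (-(1:ℝ)/3) * Real.exp (y2 x) ^ (-(1:ℝ)/3)
         + 2 * Real.exp (y1 x) ^ (-(1:ℝ)/3) * Real.exp (y2 x) ^ (-(4:ℝ)/3))

/-- Equation (E3) of the Berger Einstein ODE system, with `K = exp ∘ y1`, `phi = exp ∘ y2`:
`y2'' + (1/2) y1' y2' − 2x⁻¹(1+2x²)(1−x²)⁻¹ y2'
  + 32(1−x²)⁻² K^{-1/3} phi^{-1/3}(phi⁻¹ − 1) = 0`. -/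
noncomputable def BergerE3 (y1 y2 : ℝ → ℝ) (x : ℝ) : ℝ :=
  deriv (deriv y2) x + (1/2) * deriv y1 x * deriv y2 x
    - 2 * x⁻¹ * (1 + 2*x^2) * (1 - x^2)⁻¹ * deriv y2 x
    + 32 * ((1 - x^2)⁻¹)^2 * Real.exp (y1 x) ^ (-(1:ℝ)/3) * Real.exp (y2 x) ^ (-(1:ℝ)/3)
      * ((Real.exp (y2 x))⁻¹ - 1)

/-- A solution of the Berger boundary value problem: a pair `(y1, y2)` smooth on `[0,1]`
(realized as globally smooth functions), real analytic on `(0,1]`, satisfying (E1)–(E3)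
on `(0,1)`, with boundary conditions `K(1) = phi(1) = 1` (where `K = exp ∘ y1`,
`phi = exp ∘ y2`) and `y1'(0) = y2'(0) = y1'(1) = y2'(1) = 0`. -/
structure BergerBVPSolution (y1 y2 : ℝ → ℝ) : Prop where
  smooth1 : ContDiff ℝ (⊤ : ℕ∞) y1
  smooth2 : ContDiff ℝ (⊤ : ℕ∞) y2
  analytic1 : AnalyticOnNhd ℝ y1 (Ioc 0 1)
  analytic2 : AnalyticOnNhd ℝ y2 (Ioc 0 1)
  eqE1 : ∀ x ∈ Ioo (0:ℝ) 1, BergerE1 y1 y2 x = 0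
  eqE2 : ∀ x ∈ Ioo (0:ℝ) 1, BergerE2 y1 y2 x = 0
  eqE3 : ∀ x ∈ Ioo (0:ℝ) 1, BergerE3 y1 y2 x = 0
  bdryK : Real.exp (y1 1) = 1
  bdryPhi : Real.exp (y2 1) = 1
  der1_0 : deriv y1 0 = 0
  der2_0 : deriv y2 0 = 0
  der1_1 : deriv y1 1 = 0
  der2_1 : deriv y2 1 = 0

lemma sq_one_sub_sq_div_pos {x : ℝ} (hx : x ∈ Ioo (0 : ℝ) 1) : 0 < (1 - x ^ 2) ^ 2 / x := by
  have h : 0 < 1 - x ^ 2 := by nlinarith [hx.1, hx.2]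
  exact div_pos (pow_pos h 2) hx.1

lemma hasDerivAt_sq_one_sub_sq_div_mul {u : ℝ → ℝ} {x u' q : ℝ} (hx : x ≠ 0)
    (hx' : 1 - x ^ 2 ≠ 0) (hu : HasDerivAt u u' x)
    (hu' : u' = x⁻¹ * (1 + 3 * x ^ 2) * (1 - x ^ 2)⁻¹ * u x - q) :
    HasDerivAt (fun t => (1 - t ^ 2) ^ 2 / t * u t) (-((1 - x ^ 2) ^ 2 / x) * q) x := by
  have hμ : HasDerivAt (fun t : ℝ => (1 - t ^ 2) ^ 2 / t)
      ((2 * (1 - x ^ 2) ^ 1 * -(2 * x) * x - (1 - x ^ 2) ^ 2 * 1) / x ^ 2) x := by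
    have h : HasDerivAt (fun t : ℝ => 1 - t ^ 2) (-(2 * x)) x := by
      simpa using (hasDerivAt_pow 2 x).const_sub 1
    exact (h.pow 2).div (hasDerivAt_id x) hx
  refine (hμ.mul hu).congr_deriv ?_
  rw [hu']
  field_simp
  ring

lemma eqOn_zero_of_analyticOnNhd_Ioc {g : ℝ → ℝ} {a b c : ℝ}
    (hg : AnalyticOnNhd ℝ g (Ioc a c)) (hab : a ≤ b) (hbc : b < c) (hz : EqOn g 0 (Ioo b c)) :
    EqOn g 0 (Ioc a c) := by
  have hm : (b + c) / 2 ∈ Ioo b c := ⟨by linarith, by linarith⟩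
  refine hg.eqOn_zero_of_preconnected_of_eventuallyEq_zero isPreconnected_Ioc
    ⟨by linarith [hm.1], hm.2.le⟩ ?_
  filter_upwards [Ioo_mem_nhds hm.1 hm.2] with y hy using hz hy

noncomputable def weightedDeriv (y1 : ℝ → ℝ) (t : ℝ) : ℝ := (1 - t ^ 2) ^ 2 / t * deriv y1 t

namespace BergerBVPSolution

variable {y1 y2 : ℝ → ℝ}

theorem hasDerivAt_weightedDeriv (hsol : BergerBVPSolution y1 y2) {x : ℝ}
    (hx : x ∈ Ioo (0 : ℝ) 1) :
    HasDerivAt (weightedDeriv y1)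
      (-((1 - x ^ 2) ^ 2 / x) * ((1/6) * deriv y1 x ^ 2 + (1/3) * deriv y2 x ^ 2)) x := by
  have hdd : Differentiable ℝ (deriv y1) :=
    (contDiff_infty_iff_deriv.mp (contDiff_infty_iff_deriv.mp hsol.smooth1).2).1
  refine hasDerivAt_sq_one_sub_sq_div_mul hx.1.ne' (by nlinarith [hx.1, hx.2])
    (hdd x).hasDerivAt ?_
  have hE1 := hsol.eqE1 x hx
  unfold BergerE1 at hE1
  linarith

theorem antitoneOn_weightedDeriv (hsol : BergerBVPSolution y1 y2) :
    AntitoneOn (weightedDeriv y1) (Ioc 0 1) := by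
  have hcont : Continuous (deriv y1) :=
    (contDiff_infty_iff_deriv.mp hsol.smooth1).2.continuous
  refine antitoneOn_of_deriv_nonpos (convex_Ioc 0 1) (fun x hx => ?_) (fun x hx => ?_)
    (fun x hx => ?_)
  · have hx0 : x ≠ 0 := hx.1.ne'
    exact (((continuous_const.sub (continuous_pow 2)).pow 2).continuousAt.div
      continuousAt_id hx0 |>.mul hcont.continuousAt).continuousWithinAt
  · rw [interior_Ioc] at hx
    exact (hsol.hasDerivAt_weightedDeriv hx).differentiableAt.differentiableWithinAt
  · rw [interior_Ioc] at hx
    rw [(hsol.hasDerivAt_weightedDeriv hx).deriv]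
    have hμ := sq_one_sub_sq_div_pos hx
    nlinarith [sq_nonneg (deriv y1 x), sq_nonneg (deriv y2 x)]

theorem weightedDeriv_nonneg (hsol : BergerBVPSolution y1 y2) {x : ℝ}
    (hx : x ∈ Ioc (0 : ℝ) 1) : 0 ≤ weightedDeriv y1 x := by
  have h1 : weightedDeriv y1 1 = 0 := by simp [weightedDeriv]
  exact h1 ▸ hsol.antitoneOn_weightedDeriv hx (right_mem_Ioc.mpr one_pos) hx.2

theorem deriv_nonneg (hsol : BergerBVPSolution y1 y2) {x : ℝ} (hx : x ∈ Ioo (0 : ℝ) 1) :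
    0 ≤ deriv y1 x :=
  nonneg_of_mul_nonneg_right (hsol.weightedDeriv_nonneg (Ioo_subset_Ioc_self hx))
    (sq_one_sub_sq_div_pos hx)

theorem eqOn_deriv_zero_of_deriv_eq_zero (hsol : BergerBVPSolution y1 y2) {x₀ : ℝ}
    (hx₀ : x₀ ∈ Ioo (0 : ℝ) 1) (h₀ : deriv y1 x₀ = 0) : EqOn (deriv y2) 0 (Ioo x₀ 1) := by
  have hw : EqOn (weightedDeriv y1) 0 (Icc x₀ 1) := by
    intro x hx
    have hxI : x ∈ Ioc (0 : ℝ) 1 := ⟨hx₀.1.trans_le hx.1, hx.2⟩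
    have hle := hsol.antitoneOn_weightedDeriv ⟨hx₀.1, hx₀.2.le⟩ hxI hx.1
    simp only [weightedDeriv, h₀, mul_zero] at hle
    exact le_antisymm hle (hsol.weightedDeriv_nonneg hxI)
  intro x hx
  have hx' : x ∈ Ioo (0 : ℝ) 1 := ⟨hx₀.1.trans hx.1, hx.2⟩
  have hderiv : deriv (weightedDeriv y1) x = 0 := by
    rw [Filter.EventuallyEq.deriv_eq (f := fun _ => (0 : ℝ))]
    · exact deriv_const x 0
    · filter_upwards [Ioo_mem_nhds hx.1 hx.2] with y hy using hw ⟨hy.1.le, hy.2.le⟩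
  rw [(hsol.hasDerivAt_weightedDeriv hx').deriv] at hderiv
  have hμ := sq_one_sub_sq_div_pos hx'
  have hsq := (mul_eq_zero.mp hderiv).resolve_left (neg_ne_zero.mpr hμ.ne')
  simp only [Pi.zero_apply]
  nlinarith [sq_nonneg (deriv y1 x), sq_nonneg (deriv y2 x)]

theorem exp_zero_eq_one_of_deriv_eq_zero (hsol : BergerBVPSolution y1 y2) {x₀ : ℝ}
    (hx₀ : x₀ ∈ Ioo (0 : ℝ) 1) (h₀ : deriv y1 x₀ = 0) : Real.exp (y2 0) = 1 := by
  have hv : EqOn (deriv y2) 0 (Ioc 0 1) :=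
    eqOn_zero_of_analyticOnNhd_Ioc hsol.analytic2.deriv hx₀.1.le hx₀.2
      (hsol.eqOn_deriv_zero_of_deriv_eq_zero hx₀ h₀)
  have hd : Differentiable ℝ y2 := hsol.smooth2.differentiable (by simp)
  obtain ⟨c, hc, hslope⟩ :=
    exists_deriv_eq_slope y2 zero_lt_one hd.continuous.continuousOn hd.differentiableOn
  have h1 : y2 1 = 0 := Real.exp_eq_one_iff _ |>.mp hsol.bdryPhi
  rw [hv (Ioo_subset_Ioc_self hc)] at hslope
  have h01 : y2 0 = y2 1 := by simp only [Pi.zero_apply, sub_zero, div_one] at hslope; linarith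
  rw [h01, h1, Real.exp_zero]

theorem deriv_pos (hsol : BergerBVPSolution y1 y2) (hphi0 : Real.exp (y2 0) ≠ 1) {x : ℝ}
    (hx : x ∈ Ioo (0 : ℝ) 1) : 0 < deriv y1 x :=
  (hsol.deriv_nonneg hx).lt_of_ne fun h => hphi0 (hsol.exp_zero_eq_one_of_deriv_eq_zero hx h.symm)

end BergerBVPSolution

/-- for a solution of the Berger BVP with `phi(0) ≠ 1`, `y1' > 0` on `(0,1)`;
in particular `K = exp ∘ y1` is strictly increasing on `(0,1)`. -/
theorem berger_y1_deriv_pos (y1 y2 : ℝ → ℝ)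
    (hsol : BergerBVPSolution y1 y2)
    (hphi0 : Real.exp (y2 0) ≠ 1) :
    (∀ x ∈ Ioo (0:ℝ) 1, 0 < deriv y1 x) ∧
      StrictMonoOn (fun x => Real.exp (y1 x)) (Ioo (0:ℝ) 1) := by
  have hpos := fun x (hx : x ∈ Ioo (0:ℝ) 1) => hsol.deriv_pos hphi0 hx
  have hd : Differentiable ℝ y1 := hsol.smooth1.differentiable (by simp)
  refine ⟨hpos, strictMonoOn_of_deriv_pos (convex_Ioo 0 1)
    (Real.continuous_exp.comp hd.continuous).continuousOn fun x hx => ?_⟩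
  rw [interior_Ioo] at hx
  rw [((hd x).hasDerivAt.exp).deriv]
  exact mul_pos (Real.exp_pos _) (hpos x hx)
end

section
/- Let (y1, y2) be a solution of the Berger boundary value problem with phi(0) ≠ 1 (where phi = exp∘y2). If phi(0) < 1, then y2'(x) > 0 and phi(0) < phi(x) < 1 for all x ∈ (0,1); if phi(0) > 1, then y2'(x) < 0 and 1 < phi(x) < phi(0) for all x ∈ (0,1). In particular phi is strictly monotone on (0,1). -/
open Real Set

/-!
Equation (E3) is the divergence-form equation `(W y2')' = -G` with the positive weight
`W = e^{y1/2} (1 - x²)³ / x²` and a source `G` whose sign is opposite to that of `y2`;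
integrating from `x` to `1` with `y2'(1) = 0` gives `W(x) y2'(x) = ∫ₓ¹ G`.

Say `y2(0) < 0 = y2(1)`. If `y2` were positive somewhere, then at its maximum `c` the integral
`∫_c¹ G` vanishes, so `y2' < 0` on the last interval before `c` on which `y2 > 0`, which is
absurd. Hence `y2 ≤ 0`, so `G ≥ 0` and `y2` is nondecreasing; being analytic and not constant, it
is strictly increasing. Then `y2 < 0` on `(0,1)`, so `G > 0` there and `y2' > 0`. The case
`y2(0) > 0` follows by changing the signs of `y2` and `G`.
-/

open MeasureTheory intervalIntegral Topology Filter

theorem intervalIntegral_nonneg_of_nonneg_on {f : ℝ → ℝ} {a b : ℝ} (hab : a ≤ b)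
    (hf : ∀ x ∈ Ioo a b, 0 ≤ f x) : 0 ≤ ∫ x in a..b, f x :=
  integral_nonneg_of_ae_restrict hab <| by
    rw [Measure.restrict_congr_set Ioo_ae_eq_Icc.symm]
    exact (ae_restrict_iff' measurableSet_Ioo).2 (ae_of_all _ hf)

theorem MonotoneOn.strictMonoOn_of_analyticOnNhd {u : ℝ → ℝ} {a b : ℝ}
    (hmono : MonotoneOn u (Icc a b)) (hu : ContinuousOn u (Icc a b))
    (han : AnalyticOnNhd ℝ u (Ioc a b)) (hab : u a < u b) : StrictMonoOn u (Icc a b) := by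
  intro x hx y hy hxy
  refine (hmono hx hy hxy.le).lt_of_ne fun hxy' => hab.ne ?_
  have hconst : ∀ t ∈ Icc x y, u t = u x := fun t ht =>
    le_antisymm (hxy' ▸ hmono ⟨hx.1.trans ht.1, ht.2.trans hy.2⟩ hy ht.2)
      (hmono hx ⟨hx.1.trans ht.1, ht.2.trans hy.2⟩ ht.1)
  have hz : (x + y) / 2 ∈ Ioo x y := ⟨by linarith, by linarith⟩
  have hconst_near : u =ᶠ[𝓝 ((x + y) / 2)] fun _ => u x :=
    eventually_of_mem (Icc_mem_nhds hz.1 hz.2) hconst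
  have hconst_Icc : EqOn u (fun _ => u x) (Icc a b) :=
    (han.eqOn_of_preconnected_of_eventuallyEq analyticOnNhd_const isPreconnected_Ioc
      ⟨hx.1.trans_lt hz.1, hz.2.le.trans hy.2⟩ hconst_near).of_subset_closure
      hu continuousOn_const Ioc_subset_Icc_self
      (closure_Ioc fun h => hab.ne (congrArg u h)).ge
  have hab' : a ≤ b := hx.1.trans hx.2
  exact (hconst_Icc ⟨le_rfl, hab'⟩).trans (hconst_Icc ⟨hab', le_rfl⟩).symm

section DivergenceForm

variable {u w G : ℝ → ℝ} {a b : ℝ}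

theorem nonpos_of_weight_mul_deriv_eq_integral (hu : ContinuousOn u (Icc a b))
    (hG : ContinuousOn G (Ioc a b)) (hG_neg : ∀ t ∈ Ioo a b, 0 < u t → G t < 0)
    (hw : ∀ x ∈ Ioo a b, 0 < w x)
    (hI : ∀ x ∈ Ioo a b, w x * deriv u x = ∫ t in x..b, G t)
    (ha : u a ≤ 0) (hb : u b ≤ 0) : ∀ x ∈ Icc a b, u x ≤ 0 := by
  by_contra! ⟨x₀, hx₀, hux₀⟩
  obtain ⟨c, hc, hmax⟩ := isCompact_Icc.exists_isMaxOn ⟨x₀, hx₀⟩ hu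
  have hc_pos : 0 < u c := hux₀.trans_le (hmax hx₀)
  have hc' : c ∈ Ioo a b :=
    ⟨hc.1.lt_of_ne (by rintro rfl; linarith), hc.2.lt_of_ne (by rintro rfl; linarith)⟩
  have hdc : deriv u c = 0 := (hmax.isLocalMax (Icc_mem_nhds hc'.1 hc'.2)).deriv_eq_zero
  -- `α` is the last point of `[a, c]` where `u ≤ 0`.
  set S := Icc a c ∩ u ⁻¹' Iic 0
  have hS_bdd : BddAbove S := ⟨c, fun x hx => hx.1.2⟩
  have hα : sSup S ∈ S :=
    ((hu.mono (Icc_subset_Icc_right hc.2)).preimage_isClosed_of_isClosed isClosed_Icc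
      isClosed_Iic).csSup_mem ⟨a, ⟨le_rfl, hc.1⟩, ha⟩ hS_bdd
  set α := sSup S
  have hpos : ∀ x ∈ Ioc α c, 0 < u x := fun x hx => by
    by_contra! hux
    exact hx.1.not_ge (le_csSup hS_bdd ⟨⟨hα.1.1.trans hx.1.le, hx.2⟩, hux⟩)
  have huα : u α ≤ 0 := hα.2
  have hαc : α < c := hα.1.2.lt_of_ne (by rintro h; rw [h] at huα; linarith)
  have hderiv : ∀ x ∈ Ioo α c, deriv u x < 0 := by
    intro x hx
    have hx' : x ∈ Ioo a b := ⟨hα.1.1.trans_lt hx.1, hx.2.trans hc'.2⟩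
    have hGint : ∀ y z, x ≤ y → y ≤ z → z ≤ b → IntervalIntegrable G volume y z :=
      fun y z hy hyz hz =>
        (hG.mono (Icc_subset_Ioc (hx'.1.trans_le hy) hz)).intervalIntegrable_of_Icc hyz
    have hint : (∫ t in x..c, G t) < 0 := by
      have := intervalIntegral_pos_of_pos_on (hGint x c le_rfl hx.2.le hc'.2.le).neg
        (fun t ht => neg_pos.2 (hG_neg t ⟨hx'.1.trans ht.1, ht.2.trans hc'.2⟩
          (hpos t ⟨hx.1.trans ht.1, ht.2.le⟩))) hx.2
      simpa [intervalIntegral.integral_neg] using this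
    refine neg_of_mul_neg_right ?_ (hw x hx').le
    rwa [hI x hx', ← integral_add_adjacent_intervals (hGint x c le_rfl hx.2.le hc'.2.le)
      (hGint c b hx.2.le hc'.2.le le_rfl), ← hI c hc', hdc, mul_zero, add_zero]
  have hanti : StrictAntiOn u (Icc α c) :=
    strictAntiOn_of_deriv_neg (convex_Icc α c) (hu.mono (Icc_subset_Icc hα.1.1 hc.2))
      (by rwa [interior_Icc])
  linarith [hanti (left_mem_Icc.2 hαc.le) (right_mem_Icc.2 hαc.le) hαc]

theorem monotoneOn_of_weight_mul_deriv_eq_integral (hu : ContinuousOn u (Icc a b))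
    (hdu : DifferentiableOn ℝ u (Ioo a b)) (hG_nonneg : ∀ t ∈ Ioo a b, u t ≤ 0 → 0 ≤ G t)
    (hw : ∀ x ∈ Ioo a b, 0 < w x)
    (hI : ∀ x ∈ Ioo a b, w x * deriv u x = ∫ t in x..b, G t)
    (hnonpos : ∀ x ∈ Ioo a b, u x ≤ 0) : MonotoneOn u (Icc a b) := by
  refine monotoneOn_of_deriv_nonneg (convex_Icc a b) hu (by rwa [interior_Icc]) fun x hx => ?_
  rw [interior_Icc] at hx
  refine nonneg_of_mul_nonneg_right ?_ (hw x hx)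
  rw [hI x hx]
  exact intervalIntegral_nonneg_of_nonneg_on hx.2.le fun t ht =>
    hG_nonneg t ⟨hx.1.trans ht.1, ht.2⟩ (hnonpos t ⟨hx.1.trans ht.1, ht.2⟩)

theorem deriv_pos_of_weight_mul_deriv_eq_integral (hG : ContinuousOn G (Ioc a b))
    (hG_pos : ∀ t ∈ Ioo a b, 0 < G t) (hw : ∀ x ∈ Ioo a b, 0 < w x)
    (hI : ∀ x ∈ Ioo a b, w x * deriv u x = ∫ t in x..b, G t) :
    ∀ x ∈ Ioo a b, 0 < deriv u x := fun x hx => by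
  refine pos_of_mul_pos_right ?_ (hw x hx).le
  rw [hI x hx]
  exact intervalIntegral_pos_of_pos_on
    ((hG.mono (Icc_subset_Ioc hx.1 le_rfl)).intervalIntegrable_of_Icc hx.2.le)
    (fun t ht => hG_pos t ⟨hx.1.trans ht.1, ht.2⟩) hx.2

theorem strictMonoOn_and_deriv_pos_of_weight_mul_deriv_eq_integral
    (hu : ContinuousOn u (Icc a b)) (han : AnalyticOnNhd ℝ u (Ioc a b))
    (hG : ContinuousOn G (Ioc a b)) (hG_pos : ∀ t ∈ Ioo a b, 0 < G t ↔ u t < 0)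
    (hG_neg : ∀ t ∈ Ioo a b, G t < 0 ↔ 0 < u t) (hw : ∀ x ∈ Ioo a b, 0 < w x)
    (hI : ∀ x ∈ Ioo a b, w x * deriv u x = ∫ t in x..b, G t) (ha : u a < 0) (hb : u b = 0) :
    StrictMonoOn u (Icc a b) ∧ ∀ x ∈ Ioo a b, 0 < deriv u x := by
  have hnonpos : ∀ x ∈ Icc a b, u x ≤ 0 := nonpos_of_weight_mul_deriv_eq_integral hu hG
    (fun t ht => (hG_neg t ht).2) hw hI ha.le hb.le
  have hmono : StrictMonoOn u (Icc a b) := by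
    refine MonotoneOn.strictMonoOn_of_analyticOnNhd ?_ hu han (hb ▸ ha)
    exact monotoneOn_of_weight_mul_deriv_eq_integral hu
      (fun x hx => (han x ⟨hx.1, hx.2.le⟩).differentiableAt.differentiableWithinAt)
      (fun t ht hut => not_lt.1 fun h => ((hG_neg t ht).1 h).not_ge hut) hw hI
      (fun x hx => hnonpos x (Ioo_subset_Icc_self hx))
  refine ⟨hmono, deriv_pos_of_weight_mul_deriv_eq_integral hG (fun t ht => ?_) hw hI⟩
  exact (hG_pos t ht).2 (hb ▸ hmono (Ioo_subset_Icc_self ht) ⟨ht.1.le.trans ht.2.le, le_rfl⟩ ht.2)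

end DivergenceForm

noncomputable def bergerWeight (y1 : ℝ → ℝ) (x : ℝ) : ℝ :=
  exp (y1 x / 2) * (1 - x ^ 2) ^ 3 / x ^ 2

noncomputable def bergerSource (y1 y2 : ℝ → ℝ) (x : ℝ) : ℝ :=
  32 * exp (y1 x / 6 - y2 x / 3) * (1 - x ^ 2) / x ^ 2 * (exp (-y2 x) - 1)

theorem hasDerivAt_bergerWeight_mul_deriv {y1 y2 : ℝ → ℝ} {x : ℝ} (hx : x ∈ Ioo 0 1)
    (hy1 : DifferentiableAt ℝ y1 x) (hy2 : DifferentiableAt ℝ (deriv y2) x)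
    (hE3 : BergerE3 y1 y2 x = 0) :
    HasDerivAt (fun s => bergerWeight y1 s * deriv y2 s) (-bergerSource y1 y2 x) x := by
  have hx0 : x ≠ 0 := hx.1.ne'
  have hx1 : 1 - x ^ 2 ≠ 0 := by nlinarith [hx.1, hx.2]
  have hderiv :
      HasDerivAt (fun s => exp (y1 s / 2) * (1 - s ^ 2) ^ 3 / s ^ 2 * deriv y2 s) _ x :=
    (((hy1.hasDerivAt.div_const 2).exp.mul (((hasDerivAt_pow 2 x).const_sub 1).pow 3)).div
      (hasDerivAt_pow 2 x) (pow_ne_zero 2 hx0)).mul hy2.hasDerivAt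
  simp only [Pi.mul_apply, Pi.div_apply, Pi.pow_apply] at hderiv
  refine hderiv.congr_deriv ?_
  unfold BergerE3 at hE3
  rw [← exp_mul, ← exp_mul] at hE3
  have hy2'' : deriv (deriv y2) x = -(1/2) * deriv y1 x * deriv y2 x
      + 2 * x⁻¹ * (1 + 2*x^2) * (1 - x^2)⁻¹ * deriv y2 x
      - 32 * ((1 - x^2)⁻¹)^2 * exp (y1 x * (-(1:ℝ)/3)) * exp (y2 x * (-(1:ℝ)/3))
      * ((exp (y2 x))⁻¹ - 1) := by linear_combination hE3
  -- Express every exponential through `exp (y1 x / 6)` and `exp (-y2 x / 3)`.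
  have hA3 : exp (y1 x / 2) = exp (y1 x / 6) ^ 3 := by
    rw [← exp_nat_mul]; congr 1; push_cast; ring
  have hA2 : exp (y1 x * (-(1:ℝ)/3)) = (exp (y1 x / 6) ^ 2)⁻¹ := by
    rw [← exp_nat_mul, ← exp_neg]; congr 1; push_cast; ring
  have hB : exp (y2 x * (-(1:ℝ)/3)) = exp (-y2 x / 3) := by congr 1; ring
  have hB3 : exp (-y2 x) = exp (-y2 x / 3) ^ 3 := by
    rw [← exp_nat_mul]; congr 1; push_cast; ring
  have hAB : exp (y1 x / 6 - y2 x / 3) = exp (y1 x / 6) * exp (-y2 x / 3) := by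
    rw [← exp_add]; congr 1; ring
  rw [hy2'', bergerSource, hA3, hA2, hB, ← exp_neg, hB3, hAB]
  field_simp
  ring

theorem continuousOn_bergerSource {y1 y2 : ℝ → ℝ} (hy1 : Continuous y1) (hy2 : Continuous y2) :
    ContinuousOn (bergerSource y1 y2) (Ioc 0 1) := by
  unfold bergerSource
  fun_prop (disch := first | exact fun x hx => pow_ne_zero 2 hx.1.ne' | norm_num)

theorem bergerSource_pos_iff {y1 y2 : ℝ → ℝ} {x : ℝ} (hx : x ∈ Ioo 0 1) :
    0 < bergerSource y1 y2 x ↔ y2 x < 0 := by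
  have hx1 : 0 < 1 - x ^ 2 := by nlinarith [hx.1, hx.2]
  have hx0 := hx.1
  rw [bergerSource, mul_pos_iff_of_pos_left (by positivity), sub_pos, one_lt_exp_iff, neg_pos]

theorem bergerSource_neg_iff {y1 y2 : ℝ → ℝ} {x : ℝ} (hx : x ∈ Ioo 0 1) :
    bergerSource y1 y2 x < 0 ↔ 0 < y2 x := by
  have hx1 : 0 < 1 - x ^ 2 := by nlinarith [hx.1, hx.2]
  have hx0 := hx.1
  rw [← neg_pos, bergerSource, ← mul_neg, mul_pos_iff_of_pos_left (by positivity), neg_pos,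
    sub_neg, exp_lt_one_iff, neg_lt_zero]

theorem bergerWeight_pos (y1 : ℝ → ℝ) {x : ℝ} (hx : x ∈ Ioo 0 1) : 0 < bergerWeight y1 x := by
  have hx1 : 0 < 1 - x ^ 2 := by nlinarith [hx.1, hx.2]
  have hx0 := hx.1
  unfold bergerWeight
  positivity

namespace BergerBVPSolution

variable {y1 y2 : ℝ → ℝ}

theorem bergerWeight_mul_deriv_eq_integral (hsol : BergerBVPSolution y1 y2) {x : ℝ}
    (hx : x ∈ Ioo 0 1) :
    bergerWeight y1 x * deriv y2 x = ∫ t in x..1, bergerSource y1 y2 t := by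
  have hy1 : Differentiable ℝ y1 := hsol.smooth1.differentiable (by simp)
  obtain ⟨hy2, hy2'⟩ := contDiff_infty_iff_deriv.1 hsol.smooth2
  have hcont : ContinuousOn (fun s => bergerWeight y1 s * deriv y2 s) (Icc x 1) := by
    unfold bergerWeight
    have := hy1.continuous
    have := hy2'.continuous
    fun_prop (disch :=
      first | exact fun s hs => pow_ne_zero 2 (hx.1.trans_le hs.1).ne' | norm_num)
  have hftc := integral_eq_sub_of_hasDerivAt_of_le hx.2.le hcont
    (fun t ht => hasDerivAt_bergerWeight_mul_deriv ⟨hx.1.trans ht.1, ht.2⟩ (hy1 t)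
      (hy2'.differentiable (by simp) t) (hsol.eqE3 t ⟨hx.1.trans ht.1, ht.2⟩))
    ((continuousOn_bergerSource hsol.smooth1.continuous hy2.continuous).mono
      (Icc_subset_Ioc hx.1 le_rfl) |>.intervalIntegrable_of_Icc hx.2.le).neg
  rw [intervalIntegral.integral_neg, hsol.der2_1, mul_zero, zero_sub] at hftc
  linarith

theorem strictMonoOn_y2_of_neg (hsol : BergerBVPSolution y1 y2) (h0 : y2 0 < 0) :
    StrictMonoOn y2 (Icc 0 1) ∧ ∀ x ∈ Ioo 0 1, 0 < deriv y2 x :=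
  strictMonoOn_and_deriv_pos_of_weight_mul_deriv_eq_integral
    hsol.smooth2.continuous.continuousOn hsol.analytic2
    (continuousOn_bergerSource hsol.smooth1.continuous hsol.smooth2.continuous)
    (fun _ ht => bergerSource_pos_iff ht) (fun _ ht => bergerSource_neg_iff ht)
    (fun _ hx => bergerWeight_pos y1 hx) (fun _ hx => hsol.bergerWeight_mul_deriv_eq_integral hx)
    h0 ((exp_eq_one_iff _).1 hsol.bdryPhi)

theorem strictAntiOn_y2_of_pos (hsol : BergerBVPSolution y1 y2) (h0 : 0 < y2 0) :
    StrictAntiOn y2 (Icc 0 1) ∧ ∀ x ∈ Ioo 0 1, deriv y2 x < 0 := by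
  obtain ⟨hmono, hderiv⟩ := strictMonoOn_and_deriv_pos_of_weight_mul_deriv_eq_integral
    (u := fun x => -y2 x) (G := fun t => -bergerSource y1 y2 t)
    hsol.smooth2.continuous.neg.continuousOn hsol.analytic2.neg
    (continuousOn_bergerSource hsol.smooth1.continuous hsol.smooth2.continuous).neg
    (fun _ ht => by simpa using bergerSource_neg_iff ht)
    (fun _ ht => by simpa using bergerSource_pos_iff ht) (fun _ hx => bergerWeight_pos y1 hx)
    (fun _ hx => by
      rw [deriv.fun_neg, intervalIntegral.integral_neg,
        ← hsol.bergerWeight_mul_deriv_eq_integral hx, mul_neg])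
    (neg_neg_iff_pos.2 h0) (by simpa using (exp_eq_one_iff _).1 hsol.bdryPhi)
  exact ⟨fun x hx y hy hxy => neg_lt_neg_iff.1 (hmono hx hy hxy),
    fun x hx => by simpa using hderiv x hx⟩

end BergerBVPSolution

/-- monotonicity of `phi = exp ∘ y2` for a solution of the Berger BVP
with `phi(0) ≠ 1`. -/
theorem berger_phi_monotone (y1 y2 : ℝ → ℝ)
    (hsol : BergerBVPSolution y1 y2)
    (hphi0 : Real.exp (y2 0) ≠ 1) :
    ((Real.exp (y2 0) < 1 → ∀ x ∈ Ioo (0:ℝ) 1,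
        0 < deriv y2 x ∧ Real.exp (y2 0) < Real.exp (y2 x) ∧ Real.exp (y2 x) < 1) ∧
      (1 < Real.exp (y2 0) → ∀ x ∈ Ioo (0:ℝ) 1,
        deriv y2 x < 0 ∧ 1 < Real.exp (y2 x) ∧ Real.exp (y2 x) < Real.exp (y2 0))) ∧
      (StrictMonoOn (fun x => Real.exp (y2 x)) (Ioo (0:ℝ) 1) ∨
        StrictAntiOn (fun x => Real.exp (y2 x)) (Ioo (0:ℝ) 1)) := by
  have h1 : y2 1 = 0 := (exp_eq_one_iff _).1 hsol.bdryPhi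
  have h0_mem : (0 : ℝ) ∈ Icc 0 1 := left_mem_Icc.2 zero_le_one
  have h1_mem : (1 : ℝ) ∈ Icc 0 1 := right_mem_Icc.2 zero_le_one
  refine ⟨⟨fun hlt x hx => ?_, fun hgt x hx => ?_⟩, ?_⟩
  · obtain ⟨hmono, hderiv⟩ := hsol.strictMonoOn_y2_of_neg (exp_lt_one_iff.1 hlt)
    exact ⟨hderiv x hx, exp_lt_exp.2 (hmono h0_mem (Ioo_subset_Icc_self hx) hx.1),
      exp_lt_one_iff.2 (h1 ▸ hmono (Ioo_subset_Icc_self hx) h1_mem hx.2)⟩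
  · obtain ⟨hanti, hderiv⟩ := hsol.strictAntiOn_y2_of_pos (one_lt_exp_iff.1 hgt)
    exact ⟨hderiv x hx, one_lt_exp_iff.2 (h1 ▸ hanti (Ioo_subset_Icc_self hx) h1_mem hx.2),
      exp_lt_exp.2 (hanti h0_mem (Ioo_subset_Icc_self hx) hx.1)⟩
  · rcases Ne.lt_or_gt (mt (exp_eq_one_iff _).2 hphi0) with hneg | hpos
    · exact .inl (exp_strictMono.comp_strictMonoOn
        ((hsol.strictMonoOn_y2_of_neg hneg).1.mono Ioo_subset_Icc_self))
    · exact .inr (exp_strictMono.comp_strictAntiOn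
        ((hsol.strictAntiOn_y2_of_pos hpos).1.mono Ioo_subset_Icc_self))
end

section
/- Let (y11, y12) and (y21, y22) be two solutions of the Berger boundary value problem with the same initial value y12(0) = y22(0) and phi0 := exp(y12(0)) ≠ 1. Set z1 = y11 − y21 and z2 = y12 − y22. Then for any two zeroes 0 < x1 < x2 ≤ 1 of z1' such that z1' has no zero on the open interval (x1, x2), there exists a point x3 ∈ (x1, x2) such that (y12'(x3) + y22'(x3)) · z1'(x3) · z2'(x3) < 0. -/
open Real Set

/-!
Subtracting (E1) for the two solutions gives a linear first-order equation for `w = z1'`,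
`w' = (x⁻¹(1+3x²)(1−x²)⁻¹ − (y11' + y21')/6) w − (y12' + y22') z2' / 3`,
with integrating factor `μ = (1−x²)² x⁻¹ exp((y11 + y21)/6)`. Hence
`((μ w)²)' = −(2/3) μ² (y12' + y22') w z2'`. If the product in the conclusion were nonnegative
on `(x1, x2)`, then `(μ w)²` would be antitone there; as it vanishes at `x1`, it would vanish
on the whole interval, contradicting `w ≠ 0` inside.
-/

theorem eqOn_zero_of_mul_deriv_nonpos {g g' : ℝ → ℝ} {a b : ℝ}
    (hg : ContinuousOn g (Icc a b)) (hg' : ∀ x ∈ Ioo a b, HasDerivAt g (g' x) x)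
    (hsign : ∀ x ∈ Ioo a b, g x * g' x ≤ 0) (ha : g a = 0) :
    EqOn g 0 (Icc a b) := by
  have hanti : AntitoneOn (fun x => g x ^ 2) (Icc a b) := by
    refine antitoneOn_of_hasDerivWithinAt_nonpos (f' := fun x => 2 * (g x * g' x))
      (convex_Icc a b) (hg.pow 2) (fun x hx => ?_) (fun x hx => ?_)
    · rw [interior_Icc] at hx
      refine ((hg' x hx).fun_pow 2).hasDerivWithinAt.congr_deriv ?_
      norm_num
      ring
    · rw [interior_Icc] at hx
      linarith [hsign x hx]
  intro x hx
  have hle : g x ^ 2 ≤ g a ^ 2 := hanti ⟨le_rfl, hx.1.trans hx.2⟩ hx hx.1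
  rw [ha] at hle
  exact pow_eq_zero_iff two_ne_zero |>.mp (le_antisymm (by simpa using hle) (sq_nonneg _))

noncomputable def bergerIntegratingFactor (u v : ℝ → ℝ) (x : ℝ) : ℝ :=
  (1 - x ^ 2) ^ 2 / x * exp ((u x + v x) / 6)

theorem continuousOn_bergerIntegratingFactor {u v : ℝ → ℝ} (hu : Continuous u)
    (hv : Continuous v) : ContinuousOn (bergerIntegratingFactor u v) {0}ᶜ := by
  refine ((continuousOn_const.sub (continuousOn_pow 2)).pow 2 |>.div continuousOn_id
    fun x hx => hx).mul ?_
  fun_prop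

theorem bergerIntegratingFactor_ne_zero {u v : ℝ → ℝ} {x : ℝ} (hx : x ≠ 0)
    (hx1 : 1 - x ^ 2 ≠ 0) : bergerIntegratingFactor u v x ≠ 0 := by
  unfold bergerIntegratingFactor
  positivity

theorem hasDerivAt_bergerIntegratingFactor_mul_deriv_sub {u p v q : ℝ → ℝ} {x : ℝ}
    (hx : x ≠ 0) (hx1 : 1 - x ^ 2 ≠ 0)
    (hu : DifferentiableAt ℝ u x) (hv : DifferentiableAt ℝ v x)
    (hu' : DifferentiableAt ℝ (deriv u) x) (hv' : DifferentiableAt ℝ (deriv v) x)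
    (hEu : BergerE1 u p x = 0) (hEv : BergerE1 v q x = 0) :
    HasDerivAt (fun y => bergerIntegratingFactor u v y * (deriv u y - deriv v y))
      (-(1 / 3) * bergerIntegratingFactor u v x *
        ((deriv p x + deriv q x) * (deriv p x - deriv q x))) x := by
  have hμ : HasDerivAt (bergerIntegratingFactor u v)
      ((2 * (1 - x ^ 2) * (-2 * x) * x - (1 - x ^ 2) ^ 2) / x ^ 2 * exp ((u x + v x) / 6)
        + (1 - x ^ 2) ^ 2 / x * (exp ((u x + v x) / 6) * ((deriv u x + deriv v x) / 6))) x := by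
    have hpoly : HasDerivAt (fun y : ℝ => (1 - y ^ 2) ^ 2) (2 * (1 - x ^ 2) * (-2 * x)) x := by
      refine (((hasDerivAt_pow 2 x).const_sub 1).fun_pow 2).congr_deriv ?_
      norm_num
    refine ((hpoly.fun_div (hasDerivAt_id' x) hx).fun_mul
      ((hu.hasDerivAt.fun_add hv.hasDerivAt).div_const 6).exp).congr_deriv ?_
    ring
  refine (hμ.fun_mul (hu'.hasDerivAt.fun_sub hv'.hasDerivAt)).congr_deriv ?_
  unfold BergerE1 at hEu hEv
  have hu'' : deriv (deriv u) x = x⁻¹ * (1 + 3 * x ^ 2) * (1 - x ^ 2)⁻¹ * deriv u x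
      - (1 / 6) * deriv u x ^ 2 - (1 / 3) * deriv p x ^ 2 := by linarith
  have hv'' : deriv (deriv v) x = x⁻¹ * (1 + 3 * x ^ 2) * (1 - x ^ 2)⁻¹ * deriv v x
      - (1 / 6) * deriv v x ^ 2 - (1 / 3) * deriv q x ^ 2 := by linarith
  rw [hu'', hv'']
  unfold bergerIntegratingFactor
  field_simp
  ring

namespace BergerBVPSolution

variable {u p v q : ℝ → ℝ}

theorem differentiable_fst (h : BergerBVPSolution u p) : Differentiable ℝ u :=
  h.smooth1.differentiable (by simp)

theorem differentiable_snd (h : BergerBVPSolution u p) : Differentiable ℝ p :=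
  h.smooth2.differentiable (by simp)

theorem differentiable_deriv_fst (h : BergerBVPSolution u p) : Differentiable ℝ (deriv u) :=
  (contDiff_infty_iff_deriv.mp h.smooth1).2.differentiable (by simp)

theorem continuousOn_integratingFactor_mul_deriv_sub (h₁ : BergerBVPSolution u p)
    (h₂ : BergerBVPSolution v q) :
    ContinuousOn (fun y => bergerIntegratingFactor u v y * (deriv u y - deriv v y)) {0}ᶜ :=
  (continuousOn_bergerIntegratingFactor h₁.differentiable_fst.continuous
    h₂.differentiable_fst.continuous).mul
    (h₁.differentiable_deriv_fst.continuous.sub h₂.differentiable_deriv_fst.continuous).continuousOn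

theorem hasDerivAt_integratingFactor_mul_deriv_sub (h₁ : BergerBVPSolution u p)
    (h₂ : BergerBVPSolution v q) {x : ℝ} (hx : x ∈ Ioo (0 : ℝ) 1) :
    HasDerivAt (fun y => bergerIntegratingFactor u v y * (deriv u y - deriv v y))
      (-(1 / 3) * bergerIntegratingFactor u v x *
        ((deriv p x + deriv q x) * (deriv p x - deriv q x))) x :=
  hasDerivAt_bergerIntegratingFactor_mul_deriv_sub hx.1.ne' (by nlinarith [hx.1, hx.2])
    (h₁.differentiable_fst x) (h₂.differentiable_fst x)
    (h₁.differentiable_deriv_fst x) (h₂.differentiable_deriv_fst x)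
    (h₁.eqE1 x hx) (h₂.eqE1 x hx)

end BergerBVPSolution

theorem berger_sign_between_zeroes_general (y11 y12 y21 y22 : ℝ → ℝ)
    (hsol1 : BergerBVPSolution y11 y12) (hsol2 : BergerBVPSolution y21 y22)
    (x1 x2 : ℝ) (hx1 : 0 < x1) (hx12 : x1 < x2) (hx2 : x2 ≤ 1)
    (hz1 : deriv (fun x => y11 x - y21 x) x1 = 0)
    (hno : ∀ x ∈ Ioo x1 x2, deriv (fun x => y11 x - y21 x) x ≠ 0) :
    ∃ x3 ∈ Ioo x1 x2,
      (deriv y12 x3 + deriv y22 x3) * deriv (fun x => y11 x - y21 x) x3 *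
        deriv (fun x => y12 x - y22 x) x3 < 0 := by
  simp only [deriv_fun_sub (hsol1.differentiable_fst _) (hsol2.differentiable_fst _),
    deriv_fun_sub (hsol1.differentiable_snd _) (hsol2.differentiable_snd _)] at hz1 hno ⊢
  by_contra! hsign
  have hsub : Ioo x1 x2 ⊆ Ioo 0 1 := Ioo_subset_Ioo hx1.le hx2
  have hzero := eqOn_zero_of_mul_deriv_nonpos
    ((hsol1.continuousOn_integratingFactor_mul_deriv_sub hsol2).mono
      fun x hx => (hx1.trans_le hx.1).ne')
    (fun x hx => hsol1.hasDerivAt_integratingFactor_mul_deriv_sub hsol2 (hsub hx))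
    (fun x hx => by
      nlinarith [mul_nonneg (sq_nonneg (bergerIntegratingFactor y11 y21 x)) (hsign x hx)])
    (by simp [hz1])
  have hmid : (x1 + x2) / 2 ∈ Ioo x1 x2 := ⟨by linarith, by linarith⟩
  obtain ⟨hmid0, hmid1⟩ := hsub hmid
  refine hno _ hmid ((mul_eq_zero.mp (hzero (Ioo_subset_Icc_self hmid))).resolve_left ?_)
  exact bergerIntegratingFactor_ne_zero hmid0.ne' (by nlinarith)

/-- between two consecutive zeroes of `z1' = (y11 − y21)'` there is a
point where `(y12' + y22') z1' z2' < 0`, for two solutions of the Berger BVP with the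
same `phi(0) ≠ 1`. -/
theorem berger_sign_between_zeroes (y11 y12 y21 y22 : ℝ → ℝ)
    (hsol1 : BergerBVPSolution y11 y12) (hsol2 : BergerBVPSolution y21 y22)
    (hsame : y12 0 = y22 0)
    (hne : Real.exp (y12 0) ≠ 1)
    (x1 x2 : ℝ) (hx1 : 0 < x1) (hx12 : x1 < x2) (hx2 : x2 ≤ 1)
    (hz1 : deriv (fun x => y11 x - y21 x) x1 = 0)
    (hz2 : deriv (fun x => y11 x - y21 x) x2 = 0)
    (hno : ∀ x ∈ Ioo x1 x2, deriv (fun x => y11 x - y21 x) x ≠ 0) :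
    ∃ x3 ∈ Ioo x1 x2,
      (deriv y12 x3 + deriv y22 x3) * deriv (fun x => y11 x - y21 x) x3 *
        deriv (fun x => y12 x - y22 x) x3 < 0 :=
  berger_sign_between_zeroes_general y11 y12 y21 y22 hsol1 hsol2 x1 x2 hx1 hx12 hx2 hz1 hno
end

section
/- Let (y1, y2) be a solution of the Berger boundary value problem with phi(0) ≠ 1 (where K = exp∘y1, phi = exp∘y2). Then the strict inequality 3 − 4 (phi(0) K(0))^{-1/3} + K(0)^{-1/3} phi(0)^{-4/3} > 0 holds at the boundary point x = 0. -/
/-!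
Along (E1) the quantity `H = x⁻¹ (1 - x²)² e^{y1/6} y1'` satisfies
`H' = -(1/3) x⁻¹ (1 - x²)² e^{y1/6} (y2')² ≤ 0`, so `H` decreases from `y1''(0) e^{y1(0)/6}`
at `0⁺` to `H(1) = 0`; since `phi(0) ≠ 1 = phi(1)`, `y2'` is not identically zero, the decrease is
strict and `y1''(0) > 0`. Letting `x → 0⁺` in (E2), where `y1'/x → y1''(0)`, gives
`4 y1''(0) = 8 (6 - 8 K^{-1/3} phi^{-1/3} + 2 K^{-1/3} phi^{-4/3})` at `0`, so the left-hand side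
of the inequality is `y1''(0) / 4 > 0`.
-/

open Real Set

open Filter Topology

theorem HasDerivAt.tendsto_inv_mul_nhdsNE_zero {f : ℝ → ℝ} {a : ℝ} (hf : HasDerivAt f a 0)
    (h0 : f 0 = 0) : Tendsto (fun x => x⁻¹ * f x) (𝓝[≠] 0) (𝓝 a) := by
  simpa [h0] using hf.tendsto_slope_zero

theorem AntitoneOn.lt_of_tendsto_of_hasDerivAt_neg {f : ℝ → ℝ} {a b c d L M : ℝ}
    (hf : AntitoneOn f (Ioo a b)) (ha : Tendsto f (𝓝[>] a) (𝓝 L))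
    (hb : Tendsto f (𝓝[<] b) (𝓝 M)) (hc : c ∈ Ioo a b) (hd : HasDerivAt f d c)
    (hd0 : d < 0) : M < L := by
  by_contra! hLM
  have hconst : EqOn f (fun _ => M) (Ioo a b) := fun t ht => by
    have hle : f t ≤ L := ge_of_tendsto ha <| by
      filter_upwards [Ioo_mem_nhdsGT ht.1] with s hs
      exact hf ⟨hs.1, hs.2.trans ht.2⟩ ht hs.2.le
    have hge : M ≤ f t := le_of_tendsto hb <| by
      filter_upwards [Ioo_mem_nhdsLT ht.2] with s hs
      exact hf ht ⟨ht.1.trans hs.1, hs.2⟩ hs.1.le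
    linarith
  have hd_zero : HasDerivAt f 0 c :=
    (hasDerivAt_const c M).congr_of_eventuallyEq
      (hconst.eventuallyEq_of_mem (Ioo_mem_nhds hc.1 hc.2))
  exact hd0.ne (hd.unique hd_zero)

noncomputable def bergerH (y1 : ℝ → ℝ) (x : ℝ) : ℝ :=
  x⁻¹ * (1 - x ^ 2) ^ 2 * (deriv y1 x * exp (y1 x / 6))

theorem hasDerivAt_bergerH_of_bergerE1_eq_zero {y1 y2 : ℝ → ℝ} {x : ℝ} (hx0 : x ≠ 0) (hx1 : 1 - x ^ 2 ≠ 0)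
    (hy1 : DifferentiableAt ℝ y1 x) (hy1' : DifferentiableAt ℝ (deriv y1) x)
    (hE1 : BergerE1 y1 y2 x = 0) :
    HasDerivAt (bergerH y1)
      (-(1/3) * (x⁻¹ * (1 - x ^ 2) ^ 2 * (deriv y2 x ^ 2 * exp (y1 x / 6)))) x := by
  have hprod := ((hasDerivAt_inv hx0).mul (((hasDerivAt_pow 2 x).const_sub 1).pow 2)).mul
    (hy1'.hasDerivAt.mul (hy1.hasDerivAt.div_const 6).exp)
  refine hprod.congr_deriv ?_
  unfold BergerE1 at hE1
  simp only [Pi.mul_apply, Pi.pow_apply]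
  rw [show deriv (deriv y1) x = x⁻¹ * (1 + 3 * x ^ 2) * (1 - x ^ 2)⁻¹ * deriv y1 x
    - (1/6) * deriv y1 x ^ 2 - (1/3) * deriv y2 x ^ 2 by linarith]
  field_simp
  ring

theorem tendsto_bergerH_nhdsGT_zero {y1 : ℝ → ℝ} (hy1 : ContinuousAt y1 0)
    (hy1' : DifferentiableAt ℝ (deriv y1) 0) (h0 : deriv y1 0 = 0) :
    Tendsto (bergerH y1) (𝓝[>] 0) (𝓝 (deriv (deriv y1) 0 * exp (y1 0 / 6))) := by
  have hslope := (hy1'.hasDerivAt.tendsto_inv_mul_nhdsNE_zero h0).mono_left (nhdsGT_le_nhdsNE 0)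
  have hrest : ContinuousAt (fun x => (1 - x ^ 2) ^ 2 * exp (y1 x / 6)) 0 := by fun_prop
  have hlim := hslope.mul (hrest.tendsto.mono_left nhdsWithin_le_nhds)
  norm_num at hlim
  exact hlim.congr fun x => by simp only [bergerH]; ring

theorem tendsto_bergerH_nhdsLT_one {y1 : ℝ → ℝ} (hy1 : ContinuousAt y1 1)
    (hy1' : ContinuousAt (deriv y1) 1) : Tendsto (bergerH y1) (𝓝[<] 1) (𝓝 0) := by
  have hcont : ContinuousAt (bergerH y1) 1 := by
    unfold bergerH
    exact ((continuousAt_inv₀ one_ne_zero).mul (by fun_prop)).mul (by fun_prop)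
  simpa [bergerH] using hcont.tendsto.mono_left nhdsWithin_le_nhds

namespace BergerBVPSolution

variable {y1 y2 : ℝ → ℝ} (hsol : BergerBVPSolution y1 y2)
include hsol

theorem differentiable_fst_s8 : Differentiable ℝ y1 := hsol.smooth1.differentiable (by simp)

theorem differentiable_snd_s8 : Differentiable ℝ y2 := hsol.smooth2.differentiable (by simp)

theorem differentiable_deriv_fst_s8 : Differentiable ℝ (deriv y1) :=
  (hsol.smooth1.iterate_deriv 1).differentiable (by simp)

theorem continuous_deriv_deriv_fst : Continuous (deriv (deriv y1)) :=
  (hsol.smooth1.iterate_deriv 2).continuous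

theorem hasDerivAt_bergerH {x : ℝ} (hx : x ∈ Ioo 0 1) :
    HasDerivAt (bergerH y1)
      (-(1/3) * (x⁻¹ * (1 - x ^ 2) ^ 2 * (deriv y2 x ^ 2 * exp (y1 x / 6)))) x :=
  hasDerivAt_bergerH_of_bergerE1_eq_zero hx.1.ne' (by nlinarith [hx.1, hx.2]) (hsol.differentiable_fst_s8 x)
    (hsol.differentiable_deriv_fst_s8 x) (hsol.eqE1 x hx)

theorem antitoneOn_bergerH : AntitoneOn (bergerH y1) (Ioo 0 1) := by
  refine antitoneOn_of_hasDerivWithinAt_nonpos (convex_Ioo 0 1)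
    (fun x hx => (hsol.hasDerivAt_bergerH hx).continuousAt.continuousWithinAt)
    (fun x hx => (hsol.hasDerivAt_bergerH (interior_subset hx)).hasDerivWithinAt)
    fun x hx => ?_
  have hx : 0 < x := (interior_subset hx : x ∈ Ioo (0:ℝ) 1).1
  have : 0 ≤ x⁻¹ * (1 - x ^ 2) ^ 2 * (deriv y2 x ^ 2 * exp (y1 x / 6)) := by positivity
  linarith

theorem deriv_deriv_fst_zero_pos (hy2 : y2 0 ≠ 0) : 0 < deriv (deriv y1) 0 := by
  obtain ⟨c, hc, hslope⟩ := exists_deriv_eq_slope y2 one_pos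
    hsol.differentiable_snd_s8.continuous.continuousOn hsol.differentiable_snd_s8.differentiableOn
  have hc2 : deriv y2 c ≠ 0 := by
    rw [hslope, (exp_eq_one_iff _).mp hsol.bdryPhi]
    simpa using hy2
  have hdecr : 0 < c⁻¹ * (1 - c ^ 2) ^ 2 * (deriv y2 c ^ 2 * exp (y1 c / 6)) :=
    mul_pos (mul_pos (inv_pos.mpr hc.1) (pow_pos (by nlinarith [hc.1, hc.2]) 2))
      (mul_pos (sq_pos_of_ne_zero hc2) (exp_pos _))
  have hlt := hsol.antitoneOn_bergerH.lt_of_tendsto_of_hasDerivAt_neg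
    (tendsto_bergerH_nhdsGT_zero hsol.differentiable_fst_s8.continuous.continuousAt
      (hsol.differentiable_deriv_fst_s8 0) hsol.der1_0)
    (tendsto_bergerH_nhdsLT_one hsol.differentiable_fst_s8.continuous.continuousAt
      hsol.differentiable_deriv_fst_s8.continuous.continuousAt)
    hc (hsol.hasDerivAt_bergerH hc) (by linarith)
  exact pos_of_mul_pos_left hlt (exp_pos _).le

theorem deriv_deriv_fst_zero_eq : deriv (deriv y1) 0 =
    2 * (6 - 8 * exp (y1 0) ^ (-(1:ℝ)/3) * exp (y2 0) ^ (-(1:ℝ)/3)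
      + 2 * exp (y1 0) ^ (-(1:ℝ)/3) * exp (y2 0) ^ (-(4:ℝ)/3)) := by
  have hslope := ((hsol.differentiable_deriv_fst_s8 0).hasDerivAt.tendsto_inv_mul_nhdsNE_zero
    hsol.der1_0).mono_left (nhdsGT_le_nhdsNE 0)
  have hy1 := hsol.differentiable_fst_s8.continuous
  have hy2 := hsol.differentiable_snd_s8.continuous
  have hy1' := hsol.differentiable_deriv_fst_s8.continuous
  have hy1'' := hsol.continuous_deriv_deriv_fst
  have hcoef : ContinuousAt (fun x : ℝ => (5 + 7 * x ^ 2) * (1 - x ^ 2)⁻¹) 0 := by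
    fun_prop (disch := norm_num)
  have hrest : ContinuousAt (fun x => deriv (deriv y1) x + (1/2) * deriv y1 x ^ 2
      + 8 * ((1 - x ^ 2)⁻¹) ^ 2 *
        (6 - 8 * exp (y1 x) ^ (-(1:ℝ)/3) * exp (y2 x) ^ (-(1:ℝ)/3)
          + 2 * exp (y1 x) ^ (-(1:ℝ)/3) * exp (y2 x) ^ (-(4:ℝ)/3))) 0 := by
    fun_prop (disch := norm_num)
  have hlim := (hrest.tendsto.mono_left nhdsWithin_le_nhds).sub
    (hslope.mul (hcoef.tendsto.mono_left nhdsWithin_le_nhds))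
  have hE2 : Tendsto (BergerE2 y1 y2) (𝓝[>] 0) (𝓝 0) :=
    tendsto_const_nhds.congr' <| by
      filter_upwards [Ioo_mem_nhdsGT one_pos] with x hx
      exact (hsol.eqE2 x hx).symm
  have hA := tendsto_nhds_unique (hlim.congr fun x => by unfold BergerE2; ring) hE2
  norm_num [hsol.der1_0] at hA
  linarith

end BergerBVPSolution

/-- for a solution of the Berger BVP with `phi(0) ≠ 1`, the strict
inequality `3 − 4(phi(0) K(0))^{-1/3} + K(0)^{-1/3} phi(0)^{-4/3} > 0` holds. -/
theorem berger_boundary_inequality (y1 y2 : ℝ → ℝ)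
    (hsol : BergerBVPSolution y1 y2)
    (hphi0 : Real.exp (y2 0) ≠ 1) :
    0 < 3 - 4 * (Real.exp (y2 0) * Real.exp (y1 0)) ^ (-(1:ℝ)/3)
      + Real.exp (y1 0) ^ (-(1:ℝ)/3) * Real.exp (y2 0) ^ (-(4:ℝ)/3) := by
  have hy2 : y2 0 ≠ 0 := fun h => hphi0 (by rw [h, exp_zero])
  have hpos := hsol.deriv_deriv_fst_zero_pos hy2
  rw [hsol.deriv_deriv_fst_zero_eq] at hpos
  rw [mul_rpow (exp_pos _).le (exp_pos _).le]
  linarith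
end

section
/- Let (y1, y2) be a solution of the Berger boundary value problem with phi(0) > 1/4 and phi(0) ≠ 1 (where phi = exp∘y2). Then y1'(x) < 12 x (1−x^2)^{-1} for every x ∈ (0,1). -/
open Real Set

/-!
At an interior minimum of `y2`, equation (E3) with `y2' = 0` and `y2'' ≥ 0` forces `phi ≥ 1`, so
`phi ≥ min (phi(0), 1) > 1/4` on `[0,1]`. The combination `3 (E2) − 3 (E1)` factors as
`(y1' − 12x/(1−x²)) (y1' − 12/(x(1−x²))) = (y2')² + 48 (1−x²)⁻² K^{-1/3} phi^{-1/3} (4 − phi⁻¹)`,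
whose right side is therefore positive. Hence the second factor never vanishes on `(0,1)`; it is
negative near `0` because `y1'(0) = 0`, hence negative throughout, and so is the first factor.
-/

open Filter Topology

theorem IsLocalMin.deriv_deriv_nonneg {f : ℝ → ℝ} {x₀ : ℝ} (hmin : IsLocalMin f x₀)
    (hc : ContinuousAt f x₀) : 0 ≤ deriv (deriv f) x₀ := by
  by_contra! hneg
  have hmax : IsLocalMax f x₀ := isLocalMax_of_deriv_deriv_neg hneg hmin.deriv_eq_zero hc
  have hconst : f =ᶠ[𝓝 x₀] fun _ => f x₀ := by
    filter_upwards [hmin, hmax] with x h₁ h₂ using le_antisymm h₂ h₁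
  have hderiv : deriv f =ᶠ[𝓝 x₀] fun _ => 0 := by
    filter_upwards [hconst.eventuallyEq_nhds] with x hx using by rw [hx.deriv_eq, deriv_const]
  rw [hderiv.deriv_eq, deriv_const] at hneg
  exact hneg.false

theorem IsPreconnected.forall_lt_of_forall_ne {X α : Type*} [TopologicalSpace X]
    [LinearOrder α] [TopologicalSpace α] [OrderClosedTopology α] {s : Set X}
    (hs : IsPreconnected s) {f : X → α} (hf : ContinuousOn f s) {v : α}
    (hne : ∀ x ∈ s, f x ≠ v) {a : X} (ha : a ∈ s) (hfa : f a < v) : ∀ x ∈ s, f x < v := by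
  intro x hx
  by_contra! hvx
  obtain ⟨c, hc, hfc⟩ := hs.intermediate_value ha hx hf ⟨hfa.le, hvx⟩
  exact hne c hc hfc

theorem one_le_exp_of_bergerE3_of_isLocalMin {y1 y2 : ℝ → ℝ} {x : ℝ} (hx : x ∈ Ioo (0:ℝ) 1)
    (hE3 : BergerE3 y1 y2 x = 0) (hmin : IsLocalMin y2 x) (hc : ContinuousAt y2 x) :
    1 ≤ Real.exp (y2 x) := by
  have h2 : 0 ≤ deriv (deriv y2) x := hmin.deriv_deriv_nonneg hc
  rw [BergerE3, hmin.deriv_eq_zero] at hE3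
  have hq : 0 < 32 * ((1 - x^2)⁻¹)^2 * Real.exp (y1 x) ^ (-(1:ℝ)/3)
      * Real.exp (y2 x) ^ (-(1:ℝ)/3) := by
    have : 0 < 1 - x^2 := by nlinarith [hx.1, hx.2]
    positivity
  have : (Real.exp (y2 x))⁻¹ ≤ 1 := by nlinarith
  rwa [inv_le_one₀ (exp_pos _)] at this

theorem four_mul_rpow_sub_rpow_pos {K φ : ℝ} (hK : 0 < K) (hφ : 1/4 < φ) :
    0 < 4 * (K ^ (-(1:ℝ)/3) * φ ^ (-(1:ℝ)/3)) - K ^ (-(1:ℝ)/3) * φ ^ (-(4:ℝ)/3) := by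
  have hφ0 : 0 < φ := by linarith
  have hsplit : φ ^ (-(4:ℝ)/3) = φ ^ (-(1:ℝ)/3) * φ⁻¹ := by
    rw [← rpow_neg_one φ, ← rpow_add hφ0]
    norm_num
  have hinv : φ⁻¹ < 4 := by
    rw [inv_lt_comm₀ hφ0 (by norm_num)]
    linarith
  have hpos : 0 < K ^ (-(1:ℝ)/3) * φ ^ (-(1:ℝ)/3) := by positivity
  rw [hsplit]
  nlinarith

theorem twelve_lt_twelve_mul_inv_mul_inv {x : ℝ} (hx : x ∈ Ioo (0:ℝ) 1) :
    12 < 12 * x⁻¹ * (1 - x^2)⁻¹ := by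
  have hpos : 0 < x * (1 - x^2) := by nlinarith [hx.1, hx.2]
  have hlt : x * (1 - x^2) < 1 := by nlinarith [hx.1, hx.2]
  rw [mul_assoc, ← mul_inv, lt_mul_iff_one_lt_right (by norm_num)]
  exact one_lt_inv_iff₀.mpr ⟨hpos, hlt⟩

theorem bergerE2_sub_bergerE1_factorization {y1 y2 : ℝ → ℝ} {x : ℝ} (hx : x ≠ 0)
    (hE1 : BergerE1 y1 y2 x = 0) (hE2 : BergerE2 y1 y2 x = 0) :
    (deriv y1 x - 12 * x * (1 - x^2)⁻¹) * (deriv y1 x - 12 * x⁻¹ * (1 - x^2)⁻¹)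
      = (deriv y2 x)^2 + 48 * ((1 - x^2)⁻¹)^2 *
          (4 * (Real.exp (y1 x) ^ (-(1:ℝ)/3) * Real.exp (y2 x) ^ (-(1:ℝ)/3))
            - Real.exp (y1 x) ^ (-(1:ℝ)/3) * Real.exp (y2 x) ^ (-(4:ℝ)/3)) := by
  rw [BergerE1] at hE1
  rw [BergerE2] at hE2
  linear_combination 3 * hE2 - 3 * hE1 +
    (12 * deriv y1 x * (1 - x^2)⁻¹ * x + 144 * ((1 - x^2)⁻¹)^2) * mul_inv_cancel₀ hx

namespace BergerBVPSolution

variable {y1 y2 : ℝ → ℝ}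

theorem continuous_deriv_fst (hsol : BergerBVPSolution y1 y2) : Continuous (deriv y1) :=
  hsol.smooth1.continuous_deriv (by simp)

theorem min_le_exp (hsol : BergerBVPSolution y1 y2) {x : ℝ} (hx : x ∈ Icc (0:ℝ) 1) :
    min (Real.exp (y2 0)) 1 ≤ Real.exp (y2 x) := by
  obtain ⟨x₀, hx₀, hmin⟩ := isCompact_Icc.exists_isMinOn ⟨0, left_mem_Icc.mpr zero_le_one⟩
    hsol.smooth2.continuous.continuousOn
  refine le_trans ?_ (exp_le_exp.mpr (hmin hx))
  rcases eq_endpoints_or_mem_Ioo_of_mem_Icc hx₀ with rfl | rfl | hx₀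
  · exact min_le_left _ _
  · rw [hsol.bdryPhi]
    exact min_le_right _ _
  · exact (min_le_right _ _).trans <| one_le_exp_of_bergerE3_of_isLocalMin hx₀ (hsol.eqE3 x₀ hx₀)
      (hmin.isLocalMin (Icc_mem_nhds hx₀.1 hx₀.2)) hsol.smooth2.continuous.continuousAt

theorem exists_deriv_lt_twelve (hsol : BergerBVPSolution y1 y2) :
    ∃ a ∈ Ioo (0:ℝ) 1, deriv y1 a < 12 := by
  have hlt : ∀ᶠ x in 𝓝[>] 0, deriv y1 x < 12 :=
    nhdsWithin_le_nhds <| hsol.continuous_deriv_fst.continuousAt.eventually_lt_const (by rw [hsol.der1_0]; norm_num)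
  exact (hlt.and (Ioo_mem_nhdsGT zero_lt_one)).exists.imp fun a ha => ⟨ha.2, ha.1⟩

end BergerBVPSolution

theorem berger_y1_deriv_upper_bound_general (y1 y2 : ℝ → ℝ)
    (hsol : BergerBVPSolution y1 y2)
    (hphi0_lb : 1/4 < Real.exp (y2 0)) :
    ∀ x ∈ Ioo (0:ℝ) 1, deriv y1 x < 12 * x * (1 - x^2)⁻¹ := by
  set Q : ℝ → ℝ := fun x => deriv y1 x - 12 * x⁻¹ * (1 - x^2)⁻¹
  have hprod : ∀ x ∈ Ioo (0:ℝ) 1, 0 < (deriv y1 x - 12 * x * (1 - x^2)⁻¹) * Q x := by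
    intro x hx
    have hφ : 1/4 < Real.exp (y2 x) :=
      lt_min hphi0_lb (by norm_num) |>.trans_le (hsol.min_le_exp (Ioo_subset_Icc_self hx))
    rw [bergerE2_sub_bergerE1_factorization hx.1.ne' (hsol.eqE1 x hx) (hsol.eqE2 x hx)]
    have : 0 < 1 - x^2 := by nlinarith [hx.1, hx.2]
    have := four_mul_rpow_sub_rpow_pos (exp_pos (y1 x)) hφ
    positivity
  have hQcont : ContinuousOn Q (Ioo 0 1) := by
    intro x hx
    have : x ≠ 0 := hx.1.ne'
    have : 1 - x^2 ≠ 0 := by nlinarith [hx.1, hx.2]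
    exact (hsol.continuous_deriv_fst.continuousAt.sub (by fun_prop (disch := assumption))).continuousWithinAt
  obtain ⟨a, ha, ha12⟩ := hsol.exists_deriv_lt_twelve
  have hQneg := isPreconnected_Ioo.forall_lt_of_forall_ne hQcont (v := 0)
    (fun x hx h => by simpa [h] using hprod x hx) ha
    (by linarith [twelve_lt_twelve_mul_inv_mul_inv ha])
  intro x hx
  exact sub_neg.mp (neg_of_mul_pos_left (hprod x hx) (hQneg x hx).le)

/-- for a solution of the Berger BVP with `phi(0) > 1/4` and `phi(0) ≠ 1`,
one has `y1'(x) < 12x(1−x²)⁻¹` on `(0,1)`. -/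
theorem berger_y1_deriv_upper_bound (y1 y2 : ℝ → ℝ)
    (hsol : BergerBVPSolution y1 y2)
    (hphi0_lb : 1/4 < Real.exp (y2 0))
    (hphi0 : Real.exp (y2 0) ≠ 1) :
    ∀ x ∈ Ioo (0:ℝ) 1, deriv y1 x < 12 * x * (1 - x^2)⁻¹ :=
  berger_y1_deriv_upper_bound_general y1 y2 hsol hphi0_lb
end

section
/- Let f : [0,1) → ℝ be continuous and let Phi : (0,1) → ℝ be differentiable and satisfy Phi'(x) + ( f(x) − 4 x^{-1}(1+2x^2)(1−x^2)^{-1} ) Phi(x) = 0 for all x ∈ (0,1). If Phi(x)/x^4 → 0 as x → 0+, then Phi(x) = 0 for all x ∈ (0,1). -/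
/-!
With `F` the primitive of `f` vanishing at `0`, the function
`w x = (1 - x²)⁶ e^{F x} / x⁴` is an integrating factor of the equation:
`w' = (f - 4 x⁻¹ (1 + 2x²)(1 - x²)⁻¹) w`, so `Phi · w` is constant on `(0,1)`.
Near `0` we have `Phi · w = (Phi / x⁴) · (1 - x²)⁶ e^{F}`, which tends to `0 · 1`,
so the constant is `0`; as `w` has no zeros on `(0,1)`, `Phi` vanishes there.
-/

open Real Set Filter Topology

theorem IsOpen.mul_eq_mul_of_hasDerivAt_integratingFactor {𝕜 : Type*} [RCLike 𝕜] {s : Set 𝕜}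
    (hs : IsOpen s) (hs' : IsPreconnected s) {p y w : 𝕜 → 𝕜}
    (hy : ∀ x ∈ s, HasDerivAt y (-(p x * y x)) x) (hw : ∀ x ∈ s, HasDerivAt w (p x * w x) x)
    {a b : 𝕜} (ha : a ∈ s) (hb : b ∈ s) : y a * w a = y b * w b :=
  hs.is_const_of_deriv_eq_zero hs'
    (fun x hx => ((hy x hx).mul (hw x hx)).differentiableAt.differentiableWithinAt)
    (fun x hx => ((hy x hx).mul (hw x hx)).deriv.trans (by simp only [Pi.zero_apply]; ring))
    ha hb

section Primitive

variable {E : Type*} [NormedAddCommGroup E] [NormedSpace ℝ E]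
  {f : ℝ → E} {a b : ℝ}

theorem ContinuousOn.hasDerivAt_primitive_of_Ico [CompleteSpace E] (hf : ContinuousOn f (Ico a b)) {x : ℝ}
    (hx : x ∈ Ioo a b) : HasDerivAt (fun u => ∫ t in a..u, f t) (f x) x := by
  have hint : IntervalIntegrable f MeasureTheory.volume a x := by
    refine ContinuousOn.intervalIntegrable (hf.mono ?_)
    rw [uIcc_of_le hx.1.le]
    exact Icc_subset_Ico_right hx.2
  exact intervalIntegral.integral_hasDerivAt_right hint
    ((hf.mono Ioo_subset_Ico_self).stronglyMeasurableAtFilter isOpen_Ioo x hx)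
    (hf.continuousAt (Ico_mem_nhds hx.1 hx.2))

theorem ContinuousOn.tendsto_primitive_nhdsGT_of_Ico (hf : ContinuousOn f (Ico a b))
    (hab : a < b) : Tendsto (fun u => ∫ t in a..u, f t) (𝓝[>] a) (𝓝 0) := by
  obtain ⟨c, hac, hcb⟩ := exists_between hab
  have hint : MeasureTheory.IntegrableOn f (uIcc a c) := by
    refine (hf.mono ?_).integrableOn_compact isCompact_uIcc
    rw [uIcc_of_le hac.le]
    exact Icc_subset_Ico_right hcb
  have hcont := intervalIntegral.continuousOn_primitive_interval hint a left_mem_uIcc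
  rw [uIcc_of_le hac.le] at hcont
  simpa using (hcont.mono_of_mem_nhdsWithin (Icc_mem_nhdsGT hac)).tendsto

end Primitive

noncomputable def integratingFactor (F : ℝ → ℝ) (x : ℝ) : ℝ :=
  (1 - x ^ 2) ^ 6 * exp (F x) / x ^ 4

theorem integratingFactor_ne_zero (F : ℝ → ℝ) {x : ℝ} (hx : x ≠ 0) (hx' : 1 - x ^ 2 ≠ 0) :
    integratingFactor F x ≠ 0 :=
  div_ne_zero (mul_ne_zero (pow_ne_zero _ hx') (exp_ne_zero _)) (pow_ne_zero _ hx)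

theorem hasDerivAt_integratingFactor {F : ℝ → ℝ} {c x : ℝ} (hF : HasDerivAt F c x)
    (hx : x ≠ 0) (hx' : 1 - x ^ 2 ≠ 0) :
    HasDerivAt (integratingFactor F)
      ((c - 4 * x⁻¹ * (1 + 2 * x ^ 2) * (1 - x ^ 2)⁻¹) * integratingFactor F x) x := by
  have hsq : HasDerivAt (fun u : ℝ => 1 - u ^ 2) (-(2 * x)) x := by
    simpa using (hasDerivAt_pow 2 x).const_sub 1
  have h : HasDerivAt (integratingFactor F) _ x :=
    ((hsq.pow 6).mul hF.exp).div (hasDerivAt_pow 4 x) (pow_ne_zero 4 hx)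
  convert h using 1
  simp only [integratingFactor, Pi.pow_apply, Pi.mul_apply]
  field_simp
  ring

theorem tendsto_mul_integratingFactor {F Phi : ℝ → ℝ} (hF : Tendsto F (𝓝[>] 0) (𝓝 0))
    (hPhi : Tendsto (fun x => Phi x / x ^ 4) (𝓝[>] 0) (𝓝 0)) :
    Tendsto (fun x => Phi x * integratingFactor F x) (𝓝[>] 0) (𝓝 0) := by
  have hpoly : Tendsto (fun x : ℝ => (1 - x ^ 2) ^ 6) (𝓝[>] 0) (𝓝 1) := by
    simpa using ((by fun_prop : Continuous fun x : ℝ => (1 - x ^ 2) ^ 6).tendsto 0).mono_left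
      nhdsWithin_le_nhds
  have hexp : Tendsto (fun x => exp (F x)) (𝓝[>] 0) (𝓝 1) := by
    simpa using hF.rexp
  have hprod := hPhi.mul (hpoly.mul hexp)
  rw [zero_mul] at hprod
  refine hprod.congr fun x => ?_
  unfold integratingFactor
  ring

/-- a solution `Phi` on `(0,1)` of the singular linear ODE
`Phi' + (f(x) − 4x⁻¹(1+2x²)(1−x²)⁻¹) Phi = 0`, with `f` continuous on `[0,1)`, which
satisfies `Phi(x)/x⁴ → 0` as `x → 0⁺`, vanishes identically on `(0,1)`. -/
theorem singular_linear_ode_uniqueness (f Phi : ℝ → ℝ)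
    (hf : ContinuousOn f (Ico 0 1))
    (hdiff : ∀ x ∈ Ioo (0:ℝ) 1, DifferentiableAt ℝ Phi x)
    (hode : ∀ x ∈ Ioo (0:ℝ) 1,
      deriv Phi x + (f x - 4 * x⁻¹ * (1 + 2*x^2) * (1 - x^2)⁻¹) * Phi x = 0)
    (hlim : Filter.Tendsto (fun x => Phi x / x^4) (nhdsWithin 0 (Ioi 0)) (nhds 0)) :
    ∀ x ∈ Ioo (0:ℝ) 1, Phi x = 0 := by
  set F : ℝ → ℝ := fun u => ∫ t in (0:ℝ)..u, f t
  have hsq : ∀ x ∈ Ioo (0:ℝ) 1, 1 - x ^ 2 ≠ 0 := fun x hx => by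
    nlinarith [hx.1, hx.2]
  have hw : ∀ x ∈ Ioo (0:ℝ) 1, HasDerivAt (integratingFactor F)
      ((f x - 4 * x⁻¹ * (1 + 2*x^2) * (1 - x^2)⁻¹) * integratingFactor F x) x :=
    fun x hx => hasDerivAt_integratingFactor (hf.hasDerivAt_primitive_of_Ico hx) hx.1.ne' (hsq x hx)
  have hPhi : ∀ x ∈ Ioo (0:ℝ) 1,
      HasDerivAt Phi (-((f x - 4 * x⁻¹ * (1 + 2*x^2) * (1 - x^2)⁻¹) * Phi x)) x :=
    fun x hx => (hdiff x hx).hasDerivAt.congr_deriv (eq_neg_of_add_eq_zero_left (hode x hx))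
  have hlim0 := tendsto_mul_integratingFactor (hf.tendsto_primitive_nhdsGT_of_Ico one_pos) hlim
  intro x hx
  have hzero : Phi x * integratingFactor F x = 0 := by
    refine tendsto_nhds_unique (tendsto_const_nhds.congr' ?_) hlim0
    filter_upwards [Ioo_mem_nhdsGT one_pos] with y hy
    exact isOpen_Ioo.mul_eq_mul_of_hasDerivAt_integratingFactor isPreconnected_Ioo hPhi hw hx hy
  exact (mul_eq_zero.1 hzero).resolve_right (integratingFactor_ne_zero F hx.1.ne' (hsq x hx))
end

section
/- Let y1, y2 : (0,1) → ℝ be twice differentiable and set K = exp∘y1, phi = exp∘y2. Suppose that on (0,1) the equation (E3) y2'' + (1/2) y1' y2' − 2 x^{-1}(1+2x^2)(1−x^2)^{-1} y2' + 32 (1−x^2)^{-2} K^{-1/3} phi^{-1/3}(phi^{-1} − 1) = 0 holds. Then for all x ∈ (0,1): d/dx [ x^{-2}(1−x^2)^3 K(x)^{1/2} y2'(x) ] + 32 x^{-2}(1−x^2) K(x)^{1/6} phi(x)^{-4/3} (1 − phi(x)) = 0. -/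
open Real Set

/-!
The function `w(x) = x⁻²(1−x²)³ K(x)^{1/2}` is an integrating factor for the first-order part
of (E3): its logarithmic derivative is `y1'/2 − 2x⁻¹(1+2x²)(1−x²)⁻¹`, the coefficient of `y2'`
in (E3). Hence `(w y2')' = w · (y2'' + (y1'/2 − 2x⁻¹(1+2x²)(1−x²)⁻¹) y2')`, which by (E3) is
`w` times the negated potential term; simplifying the powers of `K` and `phi` gives the claim.
-/

lemma rpow_half_mul_rpow_neg_third {a : ℝ} (ha : 0 < a) :
    a ^ ((1:ℝ)/2) * a ^ (-(1:ℝ)/3) = a ^ ((1:ℝ)/6) := by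
  rw [← rpow_add ha]
  norm_num

lemma rpow_neg_third_mul_inv_sub_one {a : ℝ} (ha : 0 < a) :
    a ^ (-(1:ℝ)/3) * (a⁻¹ - 1) = a ^ (-(4:ℝ)/3) * (1 - a) := by
  have h : a ^ (-(1:ℝ)/3) = a ^ (-(4:ℝ)/3) * a := by
    rw [← rpow_add_one ha.ne']
    norm_num
  rw [h]
  field_simp

noncomputable def e3IntegratingFactor (y1 : ℝ → ℝ) (t : ℝ) : ℝ :=
  (t⁻¹) ^ 2 * (1 - t ^ 2) ^ 3 * exp (y1 t) ^ ((1:ℝ)/2)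

lemma hasDerivAt_e3IntegratingFactor {y1 : ℝ → ℝ} {x : ℝ} (hx : x ≠ 0) (hx' : 1 - x ^ 2 ≠ 0)
    (hy1 : DifferentiableAt ℝ y1 x) :
    HasDerivAt (e3IntegratingFactor y1)
      (e3IntegratingFactor y1 x *
        ((1/2) * deriv y1 x - 2 * x⁻¹ * (1 + 2 * x ^ 2) * (1 - x ^ 2)⁻¹)) x := by
  have h := (((hasDerivAt_inv hx).pow 2).mul
    (((hasDerivAt_const x (1:ℝ)).sub ((hasDerivAt_id x).pow 2)).pow 3)).mul
    ((hy1.hasDerivAt.mul_const ((1:ℝ)/2)).exp)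
  have hw : e3IntegratingFactor y1 =
      fun t => (t⁻¹) ^ 2 * (1 - t ^ 2) ^ 3 * exp (y1 t * (1/2)) := by
    funext t
    rw [e3IntegratingFactor, exp_mul]
  rw [hw]
  refine h.congr_deriv ?_
  norm_num
  field_simp
  ring

theorem berger_E3_divergence_form_general (y1 y2 : ℝ → ℝ)
    (hd1 : ∀ t ∈ Ioo (0:ℝ) 1, DifferentiableAt ℝ y1 t)
    (hd2' : ∀ t ∈ Ioo (0:ℝ) 1, DifferentiableAt ℝ (deriv y2) t)
    (hE3 : ∀ x ∈ Ioo (0:ℝ) 1,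
      deriv (deriv y2) x + (1/2) * deriv y1 x * deriv y2 x
        - 2 * x⁻¹ * (1 + 2*x^2) * (1 - x^2)⁻¹ * deriv y2 x
        + 32 * ((1 - x^2)⁻¹)^2 * Real.exp (y1 x) ^ (-(1:ℝ)/3)
          * Real.exp (y2 x) ^ (-(1:ℝ)/3) * ((Real.exp (y2 x))⁻¹ - 1) = 0) :
    ∀ x ∈ Ioo (0:ℝ) 1,
      HasDerivAt (fun t => (t⁻¹)^2 * (1 - t^2)^3 * Real.exp (y1 t) ^ ((1:ℝ)/2) * deriv y2 t)
        (-(32 * (x⁻¹)^2 * (1 - x^2) * Real.exp (y1 x) ^ ((1:ℝ)/6)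
          * Real.exp (y2 x) ^ (-(4:ℝ)/3) * (1 - Real.exp (y2 x)))) x := by
  intro x hx
  have hx0 : x ≠ 0 := hx.1.ne'
  have hx1 : 1 - x ^ 2 ≠ 0 := by nlinarith [hx.1, hx.2]
  have hK := rpow_half_mul_rpow_neg_third (exp_pos (y1 x))
  have hphi := rpow_neg_third_mul_inv_sub_one (exp_pos (y2 x))
  refine ((hasDerivAt_e3IntegratingFactor hx0 hx1 (hd1 x hx)).mul
    (hd2' x hx).hasDerivAt).congr_deriv ?_
  calc _ = e3IntegratingFactor y1 x * (deriv (deriv y2) x + (1/2) * deriv y1 x * deriv y2 x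
          - 2 * x⁻¹ * (1 + 2*x^2) * (1 - x^2)⁻¹ * deriv y2 x) := by ring
    _ = -(e3IntegratingFactor y1 x * 32 * ((1 - x^2)⁻¹)^2 * exp (y1 x) ^ (-(1:ℝ)/3)
          * (exp (y2 x) ^ (-(1:ℝ)/3) * ((exp (y2 x))⁻¹ - 1))) := by
      linear_combination e3IntegratingFactor y1 x * hE3 x hx
    _ = _ := by
      rw [hphi, ← hK, e3IntegratingFactor]
      field_simp

/-- divergence form of equation (E3) of the Berger Einstein ODE system,
with `K = exp ∘ y1`, `phi = exp ∘ y2`: if (E3) holds on `(0,1)`, then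
`d/dx [x⁻²(1−x²)³ K^{1/2} y2'] + 32x⁻²(1−x²) K^{1/6} phi^{-4/3}(1 − phi) = 0`
on `(0,1)`. -/
theorem berger_E3_divergence_form (y1 y2 : ℝ → ℝ)
    (hd1 : ∀ t ∈ Ioo (0:ℝ) 1, DifferentiableAt ℝ y1 t)
    (hd1' : ∀ t ∈ Ioo (0:ℝ) 1, DifferentiableAt ℝ (deriv y1) t)
    (hd2 : ∀ t ∈ Ioo (0:ℝ) 1, DifferentiableAt ℝ y2 t)
    (hd2' : ∀ t ∈ Ioo (0:ℝ) 1, DifferentiableAt ℝ (deriv y2) t)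
    (hE3 : ∀ x ∈ Ioo (0:ℝ) 1,
      deriv (deriv y2) x + (1/2) * deriv y1 x * deriv y2 x
        - 2 * x⁻¹ * (1 + 2*x^2) * (1 - x^2)⁻¹ * deriv y2 x
        + 32 * ((1 - x^2)⁻¹)^2 * Real.exp (y1 x) ^ (-(1:ℝ)/3)
          * Real.exp (y2 x) ^ (-(1:ℝ)/3) * ((Real.exp (y2 x))⁻¹ - 1) = 0) :
    ∀ x ∈ Ioo (0:ℝ) 1,
      HasDerivAt (fun t => (t⁻¹)^2 * (1 - t^2)^3 * Real.exp (y1 t) ^ ((1:ℝ)/2) * deriv y2 t)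
        (-(32 * (x⁻¹)^2 * (1 - x^2) * Real.exp (y1 x) ^ ((1:ℝ)/6)
          * Real.exp (y2 x) ^ (-(4:ℝ)/3) * (1 - Real.exp (y2 x)))) x :=
  berger_E3_divergence_form_general y1 y2 hd1 hd2' hE3
end

section
/- Let 0 < δ ≤ 1 and let y1, y2 : [0, δ) → ℝ be smooth (C^∞) with y1'(0) = y2'(0) = 0, and set K = exp∘y1, phi = exp∘y2. Suppose that for all x ∈ (0, δ) the equation (E3) y2'' + (1/2) y1' y2' − 2 x^{-1}(1+2x^2)(1−x^2)^{-1} y2' + 32 (1−x^2)^{-2} K^{-1/3} phi^{-1/3}(phi^{-1} − 1) = 0 holds. Then y2''(0) = 32 K(0)^{-1/3} phi(0)^{-4/3} (1 − phi(0)). -/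
open Real Set Filter Topology

/-! Near `x = 0` the term `x⁻¹ * y2'(x)` is a difference quotient of `y2'`, which vanishes at `0`,
so it tends to `y2''(0)`. Letting `x → 0⁺` in (E3) turns it into the linear equation
`y2''(0) - 2 y2''(0) + c(0) = 0` for the continuous remainder `c`, whence `y2''(0) = c(0)`. -/

theorem indicial_eq_of_regular_singular_ode {v b c : ℝ → ℝ} {δ : ℝ} (hδ : 0 < δ)
    (hv0 : v 0 = 0) (hv : DifferentiableAt ℝ v 0) (hv' : ContinuousAt (deriv v) 0)
    (hb : ContinuousAt b 0) (hc : ContinuousAt c 0)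
    (hode : ∀ x ∈ Ioo 0 δ, deriv v x + x⁻¹ * b x * v x + c x = 0) :
    (1 + b 0) * deriv v 0 + c 0 = 0 := by
  have hquot : Tendsto (fun x => x⁻¹ * v x) (𝓝[>] 0) (𝓝 (deriv v 0)) := by
    simpa [hv0] using hv.hasDerivAt.tendsto_slope_zero_right
  have hsing : Tendsto (fun x => -(b x * (x⁻¹ * v x)) - c x) (𝓝[>] 0)
      (𝓝 (-(b 0 * deriv v 0) - c 0)) :=
    ((hb.tendsto.mono_left nhdsWithin_le_nhds).mul hquot).neg.sub
      (hc.tendsto.mono_left nhdsWithin_le_nhds)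
  have hode' : (fun x => -(b x * (x⁻¹ * v x)) - c x) =ᶠ[𝓝[>] 0] deriv v := by
    filter_upwards [Ioo_mem_nhdsGT hδ] with x hx
    linarith [hode x hx]
  have hlim : deriv v 0 = -(b 0 * deriv v 0) - c 0 :=
    tendsto_nhds_unique (hv'.tendsto.mono_left nhdsWithin_le_nhds) (hsing.congr' hode')
  linarith

theorem rpow_neg_one_third_mul_inv_sub_one {φ : ℝ} (hφ : 0 < φ) :
    φ ^ (-(1:ℝ)/3) * (φ⁻¹ - 1) = φ ^ (-(4:ℝ)/3) * (1 - φ) := by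
  have h43 : φ ^ (-(4:ℝ)/3) = φ ^ (-(1:ℝ)/3) * φ⁻¹ := by
    rw [← rpow_neg_one φ, ← rpow_add hφ]
    norm_num
  rw [h43]
  field_simp

theorem berger_y2_second_deriv_at_zero_general (δ : ℝ) (hδ0 : 0 < δ)
    (y1 y2 : ℝ → ℝ)
    (hs1 : ContDiff ℝ (⊤ : ℕ∞) y1) (hs2 : ContDiff ℝ (⊤ : ℕ∞) y2)
    (h20 : deriv y2 0 = 0)
    (hE3 : ∀ x ∈ Ioo (0:ℝ) δ,
      deriv (deriv y2) x + (1/2) * deriv y1 x * deriv y2 x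
        - 2 * x⁻¹ * (1 + 2*x^2) * (1 - x^2)⁻¹ * deriv y2 x
        + 32 * ((1 - x^2)⁻¹)^2 * Real.exp (y1 x) ^ (-(1:ℝ)/3)
          * Real.exp (y2 x) ^ (-(1:ℝ)/3) * ((Real.exp (y2 x))⁻¹ - 1) = 0) :
    deriv (deriv y2) 0
      = 32 * Real.exp (y1 0) ^ (-(1:ℝ)/3) * Real.exp (y2 0) ^ (-(4:ℝ)/3)
        * (1 - Real.exp (y2 0)) := by
  have hy1 : Continuous y1 := hs1.continuous
  have hy2 : Continuous y2 := hs2.continuous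
  have hd1 : Continuous (deriv y1) := (contDiff_infty_iff_deriv.mp hs1).2.continuous
  have hd2 := (contDiff_infty_iff_deriv.mp hs2).2
  have hd2c : Continuous (deriv y2) := hd2.continuous
  have hdd2 : Continuous (deriv (deriv y2)) := (contDiff_infty_iff_deriv.mp hd2).2.continuous
  have key := indicial_eq_of_regular_singular_ode
    (b := fun x => -2 * (1 + 2*x^2) * (1 - x^2)⁻¹)
    (c := fun x => (1/2) * deriv y1 x * deriv y2 x
      + 32 * ((1 - x^2)⁻¹)^2 * Real.exp (y1 x) ^ (-(1:ℝ)/3)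
        * Real.exp (y2 x) ^ (-(1:ℝ)/3) * ((Real.exp (y2 x))⁻¹ - 1))
    hδ0 h20 (hd2.differentiable (by simp) 0) hdd2.continuousAt
    (by fun_prop (disch := norm_num)) (by fun_prop (disch := simp [exp_ne_zero]))
    (fun x hx => by rw [← hE3 x hx]; ring)
  have hc0 : deriv (deriv y2) 0 = 32 * Real.exp (y1 0) ^ (-(1:ℝ)/3)
      * (Real.exp (y2 0) ^ (-(1:ℝ)/3) * ((Real.exp (y2 0))⁻¹ - 1)) := by
    norm_num [h20] at key
    linarith
  rw [hc0, rpow_neg_one_third_mul_inv_sub_one (exp_pos _)]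
  ring

/-- for smooth `y1, y2` on `[0, δ)` (realized as globally smooth functions)
with `y1'(0) = y2'(0) = 0` satisfying equation (E3) of the Berger Einstein ODE system on
`(0, δ)`, one has `y2''(0) = 32 K(0)^{-1/3} phi(0)^{-4/3}(1 − phi(0))`, where
`K = exp ∘ y1`, `phi = exp ∘ y2`. -/
theorem berger_y2_second_deriv_at_zero (δ : ℝ) (hδ0 : 0 < δ) (hδ1 : δ ≤ 1)
    (y1 y2 : ℝ → ℝ)
    (hs1 : ContDiff ℝ (⊤ : ℕ∞) y1) (hs2 : ContDiff ℝ (⊤ : ℕ∞) y2)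
    (h10 : deriv y1 0 = 0) (h20 : deriv y2 0 = 0)
    (hE3 : ∀ x ∈ Ioo (0:ℝ) δ,
      deriv (deriv y2) x + (1/2) * deriv y1 x * deriv y2 x
        - 2 * x⁻¹ * (1 + 2*x^2) * (1 - x^2)⁻¹ * deriv y2 x
        + 32 * ((1 - x^2)⁻¹)^2 * Real.exp (y1 x) ^ (-(1:ℝ)/3)
          * Real.exp (y2 x) ^ (-(1:ℝ)/3) * ((Real.exp (y2 x))⁻¹ - 1) = 0) :
    deriv (deriv y2) 0
      = 32 * Real.exp (y1 0) ^ (-(1:ℝ)/3) * Real.exp (y2 0) ^ (-(4:ℝ)/3)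
        * (1 - Real.exp (y2 0)) :=
  berger_y2_second_deriv_at_zero_general δ hδ0 y1 y2 hs1 hs2 h20 hE3
end

section
/- Let 0 < δ ≤ 1 and let y1, y2 : [0, δ) → ℝ be smooth (C^∞) with y1'(0) = y2'(0) = 0. Suppose that for all x ∈ (0, δ) the equation (E1) y1'' + (1/6)(y1')^2 + (1/3)(y2')^2 − x^{-1}(1+3x^2)(1−x^2)^{-1} y1' = 0 holds. Then y1'''(0) = 0. -/
/-!
Write `u = y1'`, `v = y2'`. Multiplying (E1) by `x` and rearranging gives, for small `x > 0`,
`(x u' - u) / x² = 4 u / (1 - x²) - u² / (6 x) - v² / (3 x)`.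
Since `u` and `v` vanish at `0` and are differentiable there, `u², v² = O(x²)`, so the right-hand
side tends to `0` as `x → 0⁺`, while by L'Hôpital the left-hand side tends to
`u''(0) / 2 = y1'''(0) / 2`.
-/

open Real Set Filter Topology

theorem HasDerivAt.tendsto_div_self_of_eq_zero {w : ℝ → ℝ} {w' : ℝ} (hw : HasDerivAt w w' 0)
    (h0 : w 0 = 0) : Tendsto (fun x => w x / x) (𝓝[≠] 0) (𝓝 w') :=
  hw.tendsto_slope.congr fun x => by simp [slope, h0, div_eq_inv_mul]

theorem HasDerivAt.tendsto_sq_div_self_of_eq_zero {w : ℝ → ℝ} {w' : ℝ}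
    (hw : HasDerivAt w w' 0) (h0 : w 0 = 0) :
    Tendsto (fun x => w x ^ 2 / x) (𝓝[≠] 0) (𝓝 0) := by
  have hw_lim : Tendsto w (𝓝[≠] 0) (𝓝 0) := by
    simpa [h0] using hw.continuousAt.tendsto.mono_left (nhdsWithin_le_nhds (a := (0:ℝ)))
  simpa [sq, mul_div_assoc] using hw_lim.mul (hw.tendsto_div_self_of_eq_zero h0)

theorem tendsto_mul_deriv_sub_div_sq {u : ℝ → ℝ} (hu : ContDiff ℝ 2 u) (h0 : u 0 = 0) :
    Tendsto (fun x => (x * deriv u x - u x) / x ^ 2) (𝓝[≠] 0)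
      (𝓝 (iteratedDeriv 2 u 0 / 2)) := by
  obtain ⟨hu_diff, -, hu'⟩ := contDiff_succ_iff_deriv.mp (show ContDiff ℝ (1 + 1) u from hu)
  have hu'_diff : Differentiable ℝ (deriv u) := hu'.differentiable one_ne_zero
  have hu''_cont : Continuous (deriv (deriv u)) := hu'.continuous_deriv le_rfl
  have hf_cont : Continuous fun x => x * deriv u x - u x := by fun_prop
  rw [iteratedDeriv_succ, iteratedDeriv_one]
  refine HasDerivAt.lhopital_zero_nhdsNE (f' := fun x => x * deriv (deriv u) x)
    (g' := fun x => 2 * x)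
    (Eventually.of_forall fun x => ?_) (Eventually.of_forall fun x => ?_)
    (eventually_nhdsWithin_of_forall fun x hx => mul_ne_zero two_ne_zero hx) ?_ ?_ ?_
  · exact (((hasDerivAt_id' x).mul (hu'_diff x).hasDerivAt).sub
      (hu_diff x).hasDerivAt).congr_deriv (by ring)
  · simpa using hasDerivAt_pow 2 x
  · simpa [h0] using hf_cont.continuousAt.tendsto.mono_left (nhdsWithin_le_nhds (a := (0:ℝ)))
  · simpa using ((continuous_pow 2).tendsto (0:ℝ)).mono_left nhdsWithin_le_nhds
  · refine ((hu''_cont.tendsto 0).div_const 2).mono_left nhdsWithin_le_nhds |>.congr' ?_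
    filter_upwards [self_mem_nhdsWithin] with x (hx : x ≠ 0)
    field_simp

theorem mul_deriv_sub_div_sq_of_E1 {x a a' b : ℝ} (hx : x ≠ 0) (hx1 : 1 - x ^ 2 ≠ 0)
    (hE : a' + (1/6) * a ^ 2 + (1/3) * b ^ 2 - x⁻¹ * (1 + 3*x^2) * (1 - x^2)⁻¹ * a = 0) :
    (x * a' - a) / x ^ 2 = 4 * a / (1 - x ^ 2) - a ^ 2 / x / 6 - b ^ 2 / x / 3 := by
  rw [show a' = x⁻¹ * (1 + 3*x^2) * (1 - x^2)⁻¹ * a - (1/6) * a ^ 2 - (1/3) * b ^ 2 by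
    linarith]
  field_simp
  ring

theorem tendsto_E1_rhs_nhdsNE {u v : ℝ → ℝ} {u' v' : ℝ} (hu : HasDerivAt u u' 0)
    (hv : HasDerivAt v v' 0) (hu0 : u 0 = 0) (hv0 : v 0 = 0) :
    Tendsto (fun x => 4 * u x / (1 - x ^ 2) - u x ^ 2 / x / 6 - v x ^ 2 / x / 3) (𝓝[≠] 0)
      (𝓝 0) := by
  have hu_lim : Tendsto u (𝓝[≠] 0) (𝓝 0) := by
    simpa [hu0] using hu.continuousAt.tendsto.mono_left (nhdsWithin_le_nhds (a := (0:ℝ)))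
  have hden : Tendsto (fun x : ℝ => 1 - x ^ 2) (𝓝[≠] 0) (𝓝 1) := by
    simpa using (((continuous_pow 2).tendsto (0:ℝ)).const_sub 1).mono_left nhdsWithin_le_nhds
  simpa using (((hu_lim.const_mul 4).div hden one_ne_zero).sub
    ((hu.tendsto_sq_div_self_of_eq_zero hu0).div_const 6)).sub
    ((hv.tendsto_sq_div_self_of_eq_zero hv0).div_const 3)

theorem berger_y1_third_deriv_at_zero_general (δ : ℝ) (hδ0 : 0 < δ)
    (y1 y2 : ℝ → ℝ)
    (hs1 : ContDiff ℝ (⊤ : ℕ∞) y1) (hs2 : ContDiff ℝ (⊤ : ℕ∞) y2)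
    (h10 : deriv y1 0 = 0) (h20 : deriv y2 0 = 0)
    (hE1 : ∀ x ∈ Ioo (0:ℝ) δ,
      deriv (deriv y1) x + (1/6) * (deriv y1 x)^2 + (1/3) * (deriv y2 x)^2
        - x⁻¹ * (1 + 3*x^2) * (1 - x^2)⁻¹ * deriv y1 x = 0) :
    iteratedDeriv 3 y1 0 = 0 := by
  have hu : ContDiff ℝ 2 (deriv y1) :=
    (contDiff_infty_iff_deriv.mp hs1).2.of_le (WithTop.coe_le_coe.mpr le_top)
  have hv : Differentiable ℝ (deriv y2) :=
    (contDiff_infty_iff_deriv.mp hs2).2.differentiable (by simp)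
  have hlhs := (tendsto_mul_deriv_sub_div_sq hu h10).mono_left (nhdsGT_le_nhdsNE 0)
  have hrhs := (tendsto_E1_rhs_nhdsNE (hu.differentiable (by simp) 0).hasDerivAt
    (hv 0).hasDerivAt h10 h20).mono_left (nhdsGT_le_nhdsNE 0)
  have heq : (fun x => 4 * deriv y1 x / (1 - x ^ 2) - deriv y1 x ^ 2 / x / 6
      - deriv y2 x ^ 2 / x / 3) =ᶠ[𝓝[>] 0]
      fun x => (x * deriv (deriv y1) x - deriv y1 x) / x ^ 2 := by
    filter_upwards [Ioo_mem_nhdsGT hδ0, Ioo_mem_nhdsGT one_pos] with x hxδ hx01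
    have hx1 : 1 - x ^ 2 ≠ 0 := by nlinarith [hx01.1, hx01.2]
    exact (mul_deriv_sub_div_sq_of_E1 hxδ.1.ne' hx1 (hE1 x hxδ)).symm
  rw [iteratedDeriv_succ']
  linarith [tendsto_nhds_unique hlhs (hrhs.congr' heq)]

/-- for smooth `y1, y2` on `[0, δ)` (realized as globally smooth functions)
with `y1'(0) = y2'(0) = 0` satisfying equation (E1) of the Berger Einstein ODE system on
`(0, δ)`, the third derivative of `y1` vanishes at `0`. -/
theorem berger_y1_third_deriv_at_zero (δ : ℝ) (hδ0 : 0 < δ) (hδ1 : δ ≤ 1)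
    (y1 y2 : ℝ → ℝ)
    (hs1 : ContDiff ℝ (⊤ : ℕ∞) y1) (hs2 : ContDiff ℝ (⊤ : ℕ∞) y2)
    (h10 : deriv y1 0 = 0) (h20 : deriv y2 0 = 0)
    (hE1 : ∀ x ∈ Ioo (0:ℝ) δ,
      deriv (deriv y1) x + (1/6) * (deriv y1 x)^2 + (1/3) * (deriv y2 x)^2
        - x⁻¹ * (1 + 3*x^2) * (1 - x^2)⁻¹ * deriv y1 x = 0) :
    iteratedDeriv 3 y1 0 = 0 :=
  berger_y1_third_deriv_at_zero_general δ hδ0 y1 y2 hs1 hs2 h10 h20 hE1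
end

section
/- Let 0 < δ ≤ 1 and let y1, y2 : [0, δ) → ℝ be smooth (C^∞) with y1'(0) = y2'(0) = 0. Suppose that for all x ∈ (0, δ) the equation (E1) y1'' + (1/6)(y1')^2 + (1/3)(y2')^2 − x^{-1}(1+3x^2)(1−x^2)^{-1} y1' = 0 holds. Writing [f]_k = f^{(k)}(0)/k! for the k-th Taylor coefficient at 0, one has [y1]_5 = −(4/15) · [y2]_2 · [y2]_3; equivalently, y1^{(5)}(0)/120 = −(4/15) · (y2''(0)/2) · (y2'''(0)/6). -/
/-!
Multiplying (E1) by `x (1 - x²)` clears the singular coefficient: with `u = y1'`, `v = y2'`, the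
function `G = (x - x³)(u' + u²/6 + v²/3) - (1 + 3x²) u` is smooth on all of `ℝ` and vanishes on
`(0, δ)`, so by continuity every derivative of `G` vanishes at `0`. Since `u(0) = v(0) = 0`, the
Leibniz rule gives `G''(0) = u''(0)` and `G⁗(0) = 3u⁗(0) + 4u'(0)u''(0) + 8v'(0)v''(0) - 60u''(0)`.
Hence `u''(0) = 0` and `u⁗(0) = -(8/3) v'(0) v''(0)`, which is the claim as `y1⁽⁵⁾ = u⁗`,
`y2'' = v'` and `y2''' = v''`.
-/

open Set
open scoped ContDiff

lemma iteratedDeriv_eq_zero_of_eqOn_Ioo {F : Type*} [NormedAddCommGroup F] [NormedSpace ℝ F]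
    {f : ℝ → F} {a b : ℝ} {n : ℕ} (hab : a < b) (hf : ContDiff ℝ n f) (h : EqOn f 0 (Ioo a b)) :
    iteratedDeriv n f a = 0 := by
  have hIoo : EqOn (iteratedDeriv n f) 0 (Ioo a b) := fun x hx => by
    rw [h.iteratedDeriv_of_isOpen isOpen_Ioo n hx, Pi.zero_apply, iteratedDeriv_const_zero]
  have hIco : EqOn (iteratedDeriv n f) 0 (Ico a b) :=
    hIoo.of_subset_closure (hf.continuous_iteratedDeriv n le_rfl).continuousOn
      continuousOn_const Ioo_subset_Ico_self (by rw [closure_Ioo hab.ne]; exact Ico_subset_Icc_self)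
  exact hIco ⟨le_rfl, hab⟩

lemma iteratedDeriv_sub_cube_zero (k : ℕ) :
    iteratedDeriv k (fun x : ℝ => x - x ^ 3) 0 = if k = 1 then 1 else if k = 3 then -6 else 0 := by
  rw [iteratedDeriv_fun_sub (f := fun x => x) contDiff_id.contDiffAt (contDiff_id.pow 3).contDiffAt,
    iteratedDeriv_fun_id_zero, iteratedDeriv_fun_pow_zero]
  split_ifs <;> simp_all [Nat.factorial]

lemma iteratedDeriv_one_add_three_mul_sq_zero (k : ℕ) :
    iteratedDeriv k (fun x : ℝ => 1 + 3 * x ^ 2) 0 =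
      if k = 0 then 1 else if k = 2 then 6 else 0 := by
  rcases Nat.eq_zero_or_pos k with rfl | hk
  · simp
  rw [iteratedDeriv_const_add hk, iteratedDeriv_const_mul_field, iteratedDeriv_fun_pow_zero]
  split_ifs <;> simp_all [Nat.factorial]
  norm_num

lemma iteratedDeriv_fun_sq {f : ℝ → ℝ} (hf : ContDiff ℝ ∞ f) (n : ℕ) (x : ℝ) :
    iteratedDeriv n (fun x => f x ^ 2) x = ∑ i ∈ Finset.range (n + 1),
      n.choose i * iteratedDeriv i f x * iteratedDeriv (n - i) f x := by
  have hfn : ContDiffAt ℝ n f x := (contDiff_infty.mp hf n).contDiffAt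
  simpa only [sq] using iteratedDeriv_fun_mul hfn hfn

/-- Equation (E1) for `u = y1'`, `v = y2'`, multiplied by `x (1 - x²)`. -/
noncomputable def clearedE1 (u v : ℝ → ℝ) (x : ℝ) : ℝ :=
  (x - x ^ 3) * (deriv u x + u x ^ 2 / 6 + v x ^ 2 / 3) - (1 + 3 * x ^ 2) * u x

lemma clearedE1_eq_zero {u v : ℝ → ℝ} {x : ℝ} (hx0 : x ≠ 0) (hx1 : 1 - x ^ 2 ≠ 0)
    (hE1 : deriv u x + (1/6) * (u x)^2 + (1/3) * (v x)^2
      - x⁻¹ * (1 + 3*x^2) * (1 - x^2)⁻¹ * u x = 0) :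
    clearedE1 u v x = 0 := by
  have hclear : clearedE1 u v x = x * (1 - x ^ 2) * (deriv u x + (1/6) * (u x)^2 + (1/3) * (v x)^2
      - x⁻¹ * (1 + 3*x^2) * (1 - x^2)⁻¹ * u x) := by
    unfold clearedE1
    field_simp
  rw [hclear, hE1, mul_zero]

section ClearedE1

variable {u v : ℝ → ℝ} (hu : ContDiff ℝ ∞ u) (hv : ContDiff ℝ ∞ v)
include hu hv

lemma contDiff_clearedE1 : ContDiff ℝ ∞ (clearedE1 u v) := by
  have hu' : ContDiff ℝ ∞ (deriv u) := hu.deriv'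
  unfold clearedE1
  fun_prop

lemma iteratedDeriv_clearedE1 (n : ℕ) (x : ℝ) :
    iteratedDeriv n (clearedE1 u v) x =
      (∑ i ∈ Finset.range (n + 1), n.choose i * iteratedDeriv i (fun x : ℝ => x - x ^ 3) x *
        (iteratedDeriv (n - i + 1) u x + iteratedDeriv (n - i) (fun x => u x ^ 2) x / 6
          + iteratedDeriv (n - i) (fun x => v x ^ 2) x / 3)) -
      ∑ i ∈ Finset.range (n + 1), n.choose i * iteratedDeriv i (fun x : ℝ => 1 + 3 * x ^ 2) x *
        iteratedDeriv (n - i) u x := by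
  have hu' : ContDiff ℝ ∞ (deriv u) := hu.deriv'
  have smooth_at : ∀ {g : ℝ → ℝ} (m : ℕ), ContDiff ℝ ∞ g → ContDiffAt ℝ m g x :=
    fun m hg => (contDiff_infty.mp hg m).contDiffAt
  unfold clearedE1
  rw [iteratedDeriv_fun_sub (smooth_at n (by fun_prop)) (smooth_at n (by fun_prop)),
    iteratedDeriv_fun_mul (smooth_at n (by fun_prop)) (smooth_at n (by fun_prop)),
    iteratedDeriv_fun_mul (smooth_at n (by fun_prop)) (smooth_at n (by fun_prop))]
  congr 1
  refine Finset.sum_congr rfl fun i _ => ?_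
  rw [iteratedDeriv_fun_add (smooth_at _ (by fun_prop)) (smooth_at _ (by fun_prop)),
    iteratedDeriv_fun_add (smooth_at _ (by fun_prop)) (smooth_at _ (by fun_prop)),
    iteratedDeriv_succ', iteratedDeriv_div_const, iteratedDeriv_div_const]

variable (hu0 : u 0 = 0) (hv0 : v 0 = 0)
include hu0 hv0

lemma iteratedDeriv_two_clearedE1_zero :
    iteratedDeriv 2 (clearedE1 u v) 0 = iteratedDeriv 2 u 0 := by
  simp [iteratedDeriv_clearedE1 hu hv, iteratedDeriv_fun_sq hu, iteratedDeriv_fun_sq hv,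
    Finset.sum_range_succ, iteratedDeriv_sub_cube_zero, iteratedDeriv_one_add_three_mul_sq_zero,
    hu0, hv0]
  ring

lemma iteratedDeriv_four_clearedE1_zero :
    iteratedDeriv 4 (clearedE1 u v) 0 = 3 * iteratedDeriv 4 u 0
      + 4 * deriv u 0 * iteratedDeriv 2 u 0 + 8 * deriv v 0 * iteratedDeriv 2 v 0
      - 60 * iteratedDeriv 2 u 0 := by
  simp [iteratedDeriv_clearedE1 hu hv, iteratedDeriv_fun_sq hu, iteratedDeriv_fun_sq hv,
    Finset.sum_range_succ, iteratedDeriv_sub_cube_zero, iteratedDeriv_one_add_three_mul_sq_zero,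
    hu0, hv0, Nat.choose]
  ring

end ClearedE1

/-- for smooth `y1, y2` on `[0, δ)` (realized as globally smooth functions)
with `y1'(0) = y2'(0) = 0` satisfying equation (E1) of the Berger Einstein ODE system on
`(0, δ)`, the fifth Taylor coefficient of `y1` at `0` equals
`−(4/15)·[y2]₂·[y2]₃`, where `[f]ₖ = f⁽ᵏ⁾(0)/k!`. -/
theorem berger_y1_fifth_taylor_coeff (δ : ℝ) (hδ0 : 0 < δ) (hδ1 : δ ≤ 1)
    (y1 y2 : ℝ → ℝ)
    (hs1 : ContDiff ℝ (⊤ : ℕ∞) y1) (hs2 : ContDiff ℝ (⊤ : ℕ∞) y2)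
    (h10 : deriv y1 0 = 0) (h20 : deriv y2 0 = 0)
    (hE1 : ∀ x ∈ Ioo (0:ℝ) δ,
      deriv (deriv y1) x + (1/6) * (deriv y1 x)^2 + (1/3) * (deriv y2 x)^2
        - x⁻¹ * (1 + 3*x^2) * (1 - x^2)⁻¹ * deriv y1 x = 0) :
    iteratedDeriv 5 y1 0 / 120
      = -(4/15) * (iteratedDeriv 2 y2 0 / 2) * (iteratedDeriv 3 y2 0 / 6) := by
  have hu : ContDiff ℝ ∞ (deriv y1) := hs1.deriv'
  have hv : ContDiff ℝ ∞ (deriv y2) := hs2.deriv'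
  have hG : EqOn (clearedE1 (deriv y1) (deriv y2)) 0 (Ioo 0 δ) := fun x hx =>
    clearedE1_eq_zero hx.1.ne' (by nlinarith [hx.1, hx.2]) (hE1 x hx)
  have hG2 := iteratedDeriv_eq_zero_of_eqOn_Ioo hδ0
    (contDiff_infty.mp (contDiff_clearedE1 hu hv) 2) hG
  have hG4 := iteratedDeriv_eq_zero_of_eqOn_Ioo hδ0
    (contDiff_infty.mp (contDiff_clearedE1 hu hv) 4) hG
  rw [iteratedDeriv_two_clearedE1_zero hu hv h10 h20] at hG2
  rw [iteratedDeriv_four_clearedE1_zero hu hv h10 h20, hG2] at hG4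
  have h5 : iteratedDeriv 5 y1 = iteratedDeriv 4 (deriv y1) := iteratedDeriv_succ'
  have h2 : iteratedDeriv 2 y2 = deriv (deriv y2) := by rw [iteratedDeriv_succ', iteratedDeriv_one]
  have h3 : iteratedDeriv 3 y2 = iteratedDeriv 2 (deriv y2) := iteratedDeriv_succ'
  rw [h5, h2, h3]
  linear_combination hG4 / 360
end
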